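/- arXiv:1611.09545 — 9 statements merged into one kernel-verified Lean document; each statement's English description precedes it below -/
import Mathlib

section
/- Let G be a simple graph on n vertices with chromatic number k. Then for every natural number x, the number of proper x-colourings of G satisfies π(G,x) ≤ (x)_↓k · x^(n−k). -/
/-- The number of proper `x`-colourings of `G`. -/
noncomputable def numColorings {V : Type} [Fintype V] (G : SimpleGraph V) (x : ℕ) : ℕ :=
  Nat.card {f : V → Fin x // ∀ ⦃u w : V⦄, G.Adj u w → f u ≠ f w}

open Finset SimpleGraph

section Aux
variable {V : Type} [Fintype V]

lemma descFactorial_pow_anti (y c' : ℕ) : ∀ (c N : ℕ), c' ≤ c → c ≤ N →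
    y.descFactorial c * y ^ (N - c) ≤ y.descFactorial c' * y ^ (N - c') := by
  intro c N hc hN
  induction c, hc using Nat.le_induction generalizing N with
  | base => exact le_rfl
  | succ c hc IH =>
    have h1 : c ≤ N := by omega
    obtain ⟨t, ht⟩ : ∃ t, N - c - 1 = t := ⟨_, rfl⟩
    calc y.descFactorial (c + 1) * y ^ (N - (c + 1))
        = (y - c) * (y.descFactorial c * y ^ t) := by
          have e : N - (c + 1) = t := by omega
          rw [Nat.descFactorial_succ, e]; ring
      _ ≤ y * (y.descFactorial c * y ^ t) := by
          exact Nat.mul_le_mul_right _ (Nat.sub_le _ _)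
      _ = y.descFactorial c * y ^ (N - c) := by
          have e : N - c = t + 1 := by omega
          rw [e, pow_succ]; ring
      _ ≤ y.descFactorial c' * y ^ (N - c') := IH N h1

lemma sum_powerset_pow {α : Type*} [DecidableEq α] (m : ℕ) (M : Finset α) :
    ∀ A : ℕ, M.card ≤ A →
    ∑ T ∈ M.powerset, m ^ (A - T.card) = m ^ (A - M.card) * (m + 1) ^ M.card := by
  induction M using Finset.induction_on with
  | empty => intro A _; simp
  | @insert a s ha IH =>
    intro A hA
    rw [Finset.card_insert_of_notMem ha] at hA
    have hs : s.card ≤ A - 1 := by omega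
    rw [Finset.sum_powerset_insert ha]
    have h2 : ∑ T ∈ s.powerset, m ^ (A - (insert a T).card)
        = ∑ T ∈ s.powerset, m ^ ((A - 1) - T.card) := by
      apply Finset.sum_congr rfl
      intro T hT
      have haT : a ∉ T := fun h => ha (Finset.mem_powerset.mp hT h)
      rw [Finset.card_insert_of_notMem haT]
      congr 1
      have : T.card ≤ s.card := Finset.card_le_card (Finset.mem_powerset.mp hT)
      omega
    rw [h2, IH A (by omega), IH (A - 1) hs]
    rw [Finset.card_insert_of_notMem ha]
    have e1 : A - s.card = (A - 1 - s.card) + 1 := by omega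
    have e2 : A - (s.card + 1) = A - 1 - s.card := by omega
    rw [e1, e2, pow_succ, pow_succ]
    ring

lemma colorable_induce (G : SimpleGraph V) (s : Set V) {j : ℕ} (h : G.Colorable j) :
    (G.induce s).Colorable j := by
  obtain ⟨C⟩ := h
  exact ⟨SimpleGraph.Coloring.mk (fun u => C u.1) (fun hab => C.valid hab)⟩

lemma colorable_succ_of_indep (G : SimpleGraph V) (S : Finset V)
    (hind : ∀ a ∈ S, ∀ b ∈ S, ¬ G.Adj a b) {j : ℕ}
    (h : (G.induce {u : V | u ∉ S}).Colorable j) : G.Colorable (j + 1) := by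
  classical
  obtain ⟨C⟩ := h
  refine ⟨SimpleGraph.Coloring.mk
    (fun u => if hu : u ∈ S then Fin.last j else (C ⟨u, hu⟩).castSucc) ?_⟩
  intro a b hab
  by_cases ha : a ∈ S <;> by_cases hb : b ∈ S <;> simp only [ha, hb, dif_pos, dif_neg,
    not_false_iff]
  · exact absurd hab (hind a ha b hb)
  · exact fun h => (Fin.castSucc_lt_last (C ⟨b, hb⟩)).ne' h
  · exact fun h => (Fin.castSucc_lt_last (C ⟨a, ha⟩)).ne h
  · intro h
    exact C.valid (show (G.induce {u : V | u ∉ S}).Adj ⟨a, ha⟩ ⟨b, hb⟩ from hab)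
      (Fin.castSucc_injective _ h)


lemma numColorings_le_mul [DecidableEq V] (G : SimpleGraph V) (v : V) (x : ℕ) :
    numColorings G x ≤ x * numColorings (G.induce {u : V | u ≠ v}) x := by
  classical
  set PCG := {f : V → Fin x // ∀ ⦃u w : V⦄, G.Adj u w → f u ≠ f w}
  set PCs := {g : ({u : V | u ≠ v} : Set V) → Fin x //
      ∀ ⦃a b : ({u : V | u ≠ v} : Set V)⦄, (G.induce {u : V | u ≠ v}).Adj a b → g a ≠ g b}
  have hinj : Function.Injective (fun f : PCG =>
      ((f.1 v, ⟨fun u => f.1 u.1, fun a b hab => f.2 hab⟩) : Fin x × PCs)) := by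
    intro f f' h
    have h1 : f.1 v = f'.1 v := congrArg Prod.fst h
    have h2 : (fun (u : ({u : V | u ≠ v} : Set V)) => f.1 u.1)
        = fun (u : ({u : V | u ≠ v} : Set V)) => f'.1 u.1 :=
      congrArg Subtype.val (congrArg Prod.snd h)
    apply Subtype.ext
    funext u
    by_cases hu : u = v
    · subst hu; exact h1
    · exact congrFun h2 ⟨u, hu⟩
  have hle := Nat.card_le_card_of_injective _ hinj
  calc numColorings G x = Nat.card PCG := rfl
    _ ≤ Nat.card (Fin x × PCs) := hle
    _ = x * numColorings (G.induce {u : V | u ≠ v}) x := by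
        rw [Nat.card_prod, Nat.card_eq_fintype_card (α := Fin x), Fintype.card_fin]
        rfl

lemma caseB_count [DecidableEq V] (G : SimpleGraph V) [DecidableRel G.Adj] (v : V) (m : ℕ) :
    numColorings G (m + 1) ≤
      ∑ T ∈ ((univ.filter (fun u => u ≠ v ∧ ¬ G.Adj v u)).powerset.filter
          (fun T => ∀ a ∈ insert v T, ∀ b ∈ insert v T, ¬ G.Adj a b)),
        (m + 1) * numColorings (G.induce {u : V | u ∉ insert v T}) m := by
  classical
  set M : Finset V := univ.filter (fun u => u ≠ v ∧ ¬ G.Adj v u) with hM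
  set Idx : Finset (Finset V) := M.powerset.filter
      (fun T => ∀ a ∈ insert v T, ∀ b ∈ insert v T, ¬ G.Adj a b) with hIdx
  set PCG := {f : V → Fin (m+1) // ∀ ⦃u w : V⦄, G.Adj u w → f u ≠ f w}
  let PCT : Finset V → Type := fun T =>
    {g : ({u : V | u ∉ insert v T} : Set V) → Fin m //
      ∀ ⦃a b : ({u : V | u ∉ insert v T} : Set V)⦄,
        (G.induce {u : V | u ∉ insert v T}).Adj a b → g a ≠ g b}
  have hPCT : ∀ T, Nat.card (PCT T) = numColorings (G.induce {u : V | u ∉ insert v T}) m :=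
    fun T => rfl
  -- the encoding
  have main : numColorings G (m+1) ≤ Nat.card (Σ T : ↥Idx, Fin (m+1) × PCT T.1) := by
    -- data extracted from a coloring
    have hTf_mem : ∀ f : PCG, (univ.filter (fun u => u ≠ v ∧ f.1 u = f.1 v)) ∈ Idx := by
      intro f
      rw [hIdx, Finset.mem_filter, Finset.mem_powerset]
      constructor
      · intro u hu
        rw [Finset.mem_filter] at hu ⊢
        refine ⟨Finset.mem_univ _, hu.2.1, fun hadj => ?_⟩
        exact f.2 hadj hu.2.2.symm
      · intro a ha b hb hadj
        have hca : f.1 a = f.1 v := by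
          rcases Finset.mem_insert.mp ha with h | h
          · rw [h]
          · exact (Finset.mem_filter.mp h).2.2
        have hcb : f.1 b = f.1 v := by
          rcases Finset.mem_insert.mp hb with h | h
          · rw [h]
          · exact (Finset.mem_filter.mp h).2.2
        exact f.2 hadj (hca.trans hcb.symm)
    have hnotc : ∀ (f : PCG) (u : V), u ∉ insert v (univ.filter (fun w => w ≠ v ∧ f.1 w = f.1 v))
        → f.1 u ≠ f.1 v := by
      intro f u hu he
      apply hu
      by_cases h : u = v
      · rw [h]; exact Finset.mem_insert_self _ _
      · exact Finset.mem_insert_of_mem (Finset.mem_filter.mpr ⟨Finset.mem_univ _, h, he⟩)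
    have hsome : ∀ (f : PCG) (u : V), f.1 u ≠ f.1 v →
        (finSuccEquiv' (f.1 v) (f.1 u)).isSome := by
      intro f u hne
      rw [Option.isSome_iff_ne_none]
      intro hnone
      apply hne
      apply (finSuccEquiv' (f.1 v)).injective
      rw [hnone, finSuccEquiv'_at]
    let φ : PCG → (Σ T : ↥Idx, Fin (m+1) × PCT T.1) := fun f =>
      ⟨⟨univ.filter (fun u => u ≠ v ∧ f.1 u = f.1 v), hTf_mem f⟩,
        f.1 v,
        ⟨fun u => ((finSuccEquiv' (f.1 v)) (f.1 u.1)).get (hsome f u.1 (hnotc f u.1 u.2)),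
         by
          intro a b hab hg
          apply f.2 hab
          apply (finSuccEquiv' (f.1 v)).injective
          have h2 := congrArg Option.some hg
          simp only [Option.some_get] at h2; exact h2⟩⟩
    have hφinj : Function.Injective φ := by
      have hdec : ∀ f : PCG, ∀ u : V,
          (if hu : u ∈ insert v (φ f).1.1 then (φ f).2.1
           else (finSuccEquiv' (φ f).2.1).symm (some ((φ f).2.2.1 ⟨u, hu⟩))) = f.1 u := by
        intro f u
        by_cases hu : u ∈ insert v (φ f).1.1
        · rw [dif_pos hu]
          show f.1 v = f.1 u
          rcases Finset.mem_insert.mp hu with h | h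
          · rw [h]
          · exact ((Finset.mem_filter.mp h).2.2).symm
        · rw [dif_neg hu]
          show (finSuccEquiv' (f.1 v)).symm
              (some (((finSuccEquiv' (f.1 v)) (f.1 u)).get _)) = f.1 u
          rw [Option.some_get, Equiv.symm_apply_apply]
      intro f f' h
      apply Subtype.ext
      funext u
      rw [← hdec f u, ← hdec f' u, h]
    exact Nat.card_le_card_of_injective φ hφinj
  refine main.trans (le_of_eq ?_)
  calc Nat.card (Σ T : ↥Idx, Fin (m+1) × PCT T.1)
      = ∑ T : ↥Idx, Fintype.card (Fin (m+1) × PCT T.1) := by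
        rw [Nat.card_eq_fintype_card, Fintype.card_sigma]
    _ = ∑ T : ↥Idx, (m + 1) * numColorings (G.induce {u : V | u ∉ insert v T.1}) m := by
        apply Finset.sum_congr rfl
        intro T _
        rw [Fintype.card_prod, Fintype.card_fin, ← Nat.card_eq_fintype_card (α := PCT T.1),
          hPCT]
    _ = ∑ T ∈ Idx, (m + 1) * numColorings (G.induce {u : V | u ∉ insert v T}) m :=
        Finset.sum_coe_sort Idx
          (fun T => (m + 1) * numColorings (G.induce {u : V | u ∉ insert v T}) m)

end Aux

theorem main_induction : ∀ n : ℕ, ∀ (V : Type) [Fintype V] (G : SimpleGraph V),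
    Fintype.card V = n → ∀ (k x : ℕ), G.chromaticNumber = k →
    numColorings G x ≤ x.descFactorial k * x ^ (n - k) := by
  intro n
  induction n using Nat.strong_induction_on with
  | _ n IH =>
    intro V _ G hn k x hk
    classical
    rcases Nat.eq_zero_or_pos n with h0 | hpos
    · -- empty graph
      subst h0
      haveI : IsEmpty V := Fintype.card_eq_zero_iff.mp hn
      have hk0 : ((k : ℕ) : ℕ∞) = 0 := by rw [← hk, chromaticNumber_eq_zero_of_isEmpty]
      have hkz : k = 0 := by exact_mod_cast hk0
      subst hkz
      have hsub : Subsingleton {f : V → Fin x // ∀ ⦃u w : V⦄, G.Adj u w → f u ≠ f w} := by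
        constructor
        intro a b
        apply Subtype.ext
        funext u
        exact isEmptyElim u
      have h1 : numColorings G x ≤ 1 := by
        rw [numColorings, Nat.card_eq_fintype_card]
        exact Fintype.card_le_one_iff_subsingleton.mpr hsub
      simpa using h1
    · haveI : Nonempty V := Fintype.card_pos_iff.mp (hn ▸ hpos)
      rcases Nat.eq_zero_or_pos x with hx0 | hxpos
      · subst hx0
        haveI : IsEmpty {f : V → Fin 0 // ∀ ⦃u w : V⦄, G.Adj u w → f u ≠ f w} :=
          ⟨fun f => (f.1 (Classical.arbitrary V)).elim0⟩
        have : numColorings G 0 = 0 := Nat.card_of_isEmpty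
        rw [this]
        exact Nat.zero_le _
      · rcases Nat.eq_zero_or_pos k with hk0 | hkpos
        · exfalso
          rw [hk0] at hk
          haveI := isEmpty_of_chromaticNumber_eq_zero (G := G) (by exact_mod_cast hk)
          exact (IsEmpty.false (Classical.arbitrary V))
        obtain ⟨m, rfl⟩ : ∃ m, x = m + 1 := ⟨x - 1, by omega⟩
        obtain ⟨κ, rfl⟩ : ∃ κ, k = κ + 1 := ⟨k - 1, by omega⟩
        have hGcol : G.Colorable (κ + 1) := chromaticNumber_le_iff_colorable.mp (le_of_eq hk)
        have hnotcol : ¬ G.Colorable κ := by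
          intro h
          have h2 := h.chromaticNumber_le
          rw [hk] at h2
          have h3 : (κ + 1 : ℕ) ≤ κ := by exact_mod_cast h2
          omega
        by_cases hA : ∃ w : V, ¬ (G.induce {u : V | u ≠ w}).Colorable κ
        · -- Case A : non-critical vertex
          obtain ⟨w, hw⟩ := hA
          set s : Set V := {u : V | u ≠ w} with hs
          have hcards : Fintype.card ↥s = n - 1 := by
            have e1 : Fintype.card ↥s = Fintype.card {u : V // u ≠ w} :=
              Fintype.card_congr (Equiv.subtypeEquivRight (fun u => Iff.rfl))
            rw [e1, Fintype.card_subtype, Finset.filter_ne',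
              Finset.card_erase_of_mem (Finset.mem_univ _), Finset.card_univ, hn]
          have hcol_s : (G.induce s).Colorable (κ + 1) := colorable_induce G s hGcol
          have hchi_s : (G.induce s).chromaticNumber = ((κ + 1 : ℕ) : ℕ∞) := by
            refine le_antisymm hcol_s.chromaticNumber_le ?_
            have h2 : ¬((G.induce s).chromaticNumber ≤ (κ : ℕ∞)) := fun hle =>
              hw (chromaticNumber_le_iff_colorable.mp hle)
            have h3 : (κ : ℕ∞) < (G.induce s).chromaticNumber := not_le.mp h2
            have h4 : (κ : ℕ∞) + 1 ≤ (G.induce s).chromaticNumber :=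
              (ENat.add_one_le_iff (by simp)).mpr h3
            calc ((κ + 1 : ℕ) : ℕ∞) = (κ : ℕ∞) + 1 := by push_cast; ring
              _ ≤ _ := h4
          have hk_le : κ + 1 ≤ n - 1 := by
            have h5 := (G.induce s).colorable_of_fintype.chromaticNumber_le
            rw [hchi_s, hcards] at h5
            exact_mod_cast h5
          have hbound := IH (n - 1) (by omega) ↥s (G.induce s) hcards (κ + 1) (m + 1) hchi_s
          calc numColorings G (m + 1) ≤ (m + 1) * numColorings (G.induce s) (m + 1) :=
                numColorings_le_mul G w (m + 1)
            _ ≤ (m + 1) * ((m+1).descFactorial (κ+1) * (m+1) ^ (n - 1 - (κ+1))) :=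
                Nat.mul_le_mul_left _ hbound
            _ = (m+1).descFactorial (κ+1) * (m+1) ^ (n - (κ+1)) := by
                have e : n - (κ+1) = (n - 1 - (κ+1)) + 1 := by omega
                rw [e, pow_succ]; ring
        · -- Case B : every vertex is critical
          push_neg at hA
          obtain ⟨v⟩ : Nonempty V := inferInstance
          set M : Finset V := univ.filter (fun u => u ≠ v ∧ ¬ G.Adj v u) with hMdef
          have hM1 : M.card ≤ n - 1 := by
            have hsub2 : M ⊆ univ.erase v := fun u hu =>
              Finset.mem_erase.mpr ⟨(Finset.mem_filter.mp hu).2.1, Finset.mem_univ _⟩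
            calc M.card ≤ (univ.erase v).card := Finset.card_le_card hsub2
              _ = n - 1 := by
                  rw [Finset.card_erase_of_mem (Finset.mem_univ _), Finset.card_univ, hn]
          have hMn : M.card + (κ + 1) ≤ n := by
            by_contra hcon
            push_neg at hcon
            set nb : Finset V := univ.filter (fun u => G.Adj v u) with hnbdef
            have hunion : univ.erase v = M ∪ nb := by
              ext u
              simp only [Finset.mem_erase, Finset.mem_univ, and_true, hMdef, hnbdef,
                Finset.mem_union, Finset.mem_filter, true_and]
              constructor
              · intro hu
                by_cases had : G.Adj v u
                · exact Or.inr had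
                · exact Or.inl ⟨hu, had⟩
              · rintro (⟨h1, _⟩ | h2)
                · exact h1
                · exact fun he => (G.ne_of_adj h2) he.symm
            have hdisj : Disjoint M nb := by
              rw [Finset.disjoint_left]
              intro u hu hnbu
              exact (Finset.mem_filter.mp hu).2.2 (Finset.mem_filter.mp hnbu).2
            have hnbcard : nb.card = n - 1 - M.card := by
              have := Finset.card_union_of_disjoint hdisj
              rw [← hunion] at this
              have he : (univ.erase v).card = n - 1 := by
                rw [Finset.card_erase_of_mem (Finset.mem_univ _), Finset.card_univ, hn]
              omega
            have hnb : nb.card < κ := by omega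
            obtain ⟨C⟩ := hA v
            set S : Finset (Fin κ) :=
              nb.attach.image (fun u => C ⟨u.1, fun he => (G.ne_of_adj
                (Finset.mem_filter.mp u.2).2) he.symm⟩) with hSdef
            have hScard : S.card < κ := by
              calc S.card ≤ nb.attach.card := Finset.card_image_le
                _ = nb.card := Finset.card_attach
                _ < κ := hnb
            have hex : ∃ a : Fin κ, a ∉ S := by
              by_contra hno
              push_neg at hno
              have : (Finset.univ : Finset (Fin κ)) ⊆ S := fun a _ => hno a
              have := Finset.card_le_card this
              rw [Finset.card_univ, Fintype.card_fin] at this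
              omega
            obtain ⟨a, ha⟩ := hex
            apply hnotcol
            have hmemS : ∀ (q : V) (hq : q ≠ v), G.Adj v q → C ⟨q, hq⟩ ∈ S := by
              intro q hq hadj
              have hqnb : q ∈ nb := Finset.mem_filter.mpr ⟨Finset.mem_univ _, hadj⟩
              rw [hSdef]
              apply Finset.mem_image.mpr
              exact ⟨⟨q, hqnb⟩, Finset.mem_attach _ _, rfl⟩
            refine ⟨SimpleGraph.Coloring.mk (fun u => if h : u = v then a else C ⟨u, h⟩) ?_⟩
            intro p q hpq
            have hfv : (fun u => if h : u = v then a else C ⟨u, h⟩) v = a := dif_pos rfl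
            have hfu : ∀ (u : V) (h : ¬ u = v),
                (fun u => if h : u = v then a else C ⟨u, h⟩) u = C ⟨u, h⟩ :=
              fun u h => dif_neg h
            by_cases hp : p = v <;> by_cases hq : q = v
            · rw [hp, hq] at hpq
              exact absurd hpq (G.loopless.irrefl v)
            · rw [hp] at hpq ⊢
              rw [dif_pos (rfl : v = v), dif_neg hq]
              exact fun he => ha (he ▸ hmemS q hq hpq)
            · rw [hq] at hpq ⊢
              rw [dif_pos (rfl : v = v), dif_neg hp]
              intro he
              exact ha (he.symm ▸ hmemS p hp hpq.symm)
            · rw [dif_neg hp, dif_neg hq]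
              exact C.valid (show (G.induce {u : V | u ≠ v}).Adj ⟨p, hp⟩ ⟨q, hq⟩ from hpq)
          -- decomposition over the color class of v
          have hcount := caseB_count G v m
          have hterm : ∀ T ∈ M.powerset.filter
              (fun T => ∀ a ∈ insert v T, ∀ b ∈ insert v T, ¬ G.Adj a b),
              (m + 1) * numColorings (G.induce {u : V | u ∉ insert v T}) m
                ≤ (m + 1) * (m.descFactorial κ * m ^ ((n - (κ + 1)) - T.card)) := by
            intro T hT
            have hT' := Finset.mem_filter.mp hT
            have hTM : T ⊆ M := Finset.mem_powerset.mp hT'.1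
            have hTind := hT'.2
            have hvT : v ∉ T := fun hmem => (Finset.mem_filter.mp (hTM hmem)).2.1 rfl
            have hTcard : T.card ≤ M.card := Finset.card_le_card hTM
            apply Nat.mul_le_mul_left
            set s : Set V := {u : V | u ∉ insert v T} with hsdef
            have hcards : Fintype.card ↥s = n - (T.card + 1) := by
              have e1 : Fintype.card ↥s = Fintype.card {u : V // u ∉ insert v T} :=
                Fintype.card_congr (Equiv.subtypeEquivRight (fun u => Iff.rfl))
              rw [e1, Fintype.card_subtype]
              have e2 : univ.filter (fun u => u ∉ insert v T) = (insert v T)ᶜ := by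
                ext u
                simp
              rw [e2, Finset.card_compl, Finset.card_insert_of_notMem hvT, hn]
            have hcol_card := (G.induce s).colorable_of_fintype
            have hctop : (G.induce s).chromaticNumber ≠ ⊤ :=
              ne_top_of_le_ne_top (by simp) hcol_card.chromaticNumber_le
            have hcoe : (((G.induce s).chromaticNumber.toNat : ℕ) : ℕ∞)
                = (G.induce s).chromaticNumber := ENat.coe_toNat hctop
            set cT := (G.induce s).chromaticNumber.toNat with hcTdef
            have hchiT : (G.induce s).chromaticNumber = (cT : ℕ∞) := hcoe.symm
            have hIHT := IH (n - (T.card + 1)) (by omega) ↥s (G.induce s) hcards cT m hchiT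
            have hcolcT : (G.induce s).Colorable cT := colorable_chromaticNumber_of_fintype _
            have hGsucc : G.Colorable (cT + 1) :=
              colorable_succ_of_indep G (insert v T) hTind hcolcT
            have hκle : κ ≤ cT := by
              by_contra hlt
              push_neg at hlt
              exact hnotcol (hGsucc.mono (by omega))
            have hcle : cT ≤ n - (T.card + 1) := by
              have h6 := hcol_card.chromaticNumber_le
              rw [hchiT, hcards] at h6
              exact_mod_cast h6
            calc numColorings (G.induce s) m
                ≤ m.descFactorial cT * m ^ ((n - (T.card + 1)) - cT) := hIHT
              _ ≤ m.descFactorial κ * m ^ ((n - (T.card + 1)) - κ) :=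
                  descFactorial_pow_anti m κ cT (n - (T.card + 1)) hκle hcle
              _ = m.descFactorial κ * m ^ ((n - (κ + 1)) - T.card) := by
                  congr 2
                  omega
          have hMk : M.card ≤ n - (κ + 1) := by omega
          calc numColorings G (m + 1)
              ≤ ∑ T ∈ M.powerset.filter
                  (fun T => ∀ a ∈ insert v T, ∀ b ∈ insert v T, ¬ G.Adj a b),
                  (m + 1) * numColorings (G.induce {u : V | u ∉ insert v T}) m := hcount
            _ ≤ ∑ T ∈ M.powerset.filter
                  (fun T => ∀ a ∈ insert v T, ∀ b ∈ insert v T, ¬ G.Adj a b),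
                  (m + 1) * (m.descFactorial κ * m ^ ((n - (κ + 1)) - T.card)) :=
                Finset.sum_le_sum hterm
            _ ≤ ∑ T ∈ M.powerset,
                  (m + 1) * (m.descFactorial κ * m ^ ((n - (κ + 1)) - T.card)) :=
                Finset.sum_le_sum_of_subset (Finset.filter_subset _ _)
            _ = (m + 1) * m.descFactorial κ
                  * ∑ T ∈ M.powerset, m ^ ((n - (κ + 1)) - T.card) := by
                rw [Finset.mul_sum]
                apply Finset.sum_congr rfl
                intro T _
                ring
            _ = (m + 1) * m.descFactorial κ
                  * (m ^ ((n - (κ + 1)) - M.card) * (m + 1) ^ M.card) := by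
                rw [sum_powerset_pow m M (n - (κ + 1)) hMk]
            _ ≤ (m + 1) * m.descFactorial κ
                  * ((m + 1) ^ ((n - (κ + 1)) - M.card) * (m + 1) ^ M.card) := by
                apply Nat.mul_le_mul_left
                apply Nat.mul_le_mul_right
                exact Nat.pow_le_pow_left (Nat.le_succ m) _
            _ = (m + 1).descFactorial (κ + 1) * (m + 1) ^ (n - (κ + 1)) := by
                rw [← pow_add, Nat.succ_descFactorial_succ]
                have e : (n - (κ + 1)) - M.card + M.card = n - (κ + 1) := by omega
                rw [e, mul_assoc]

/-- If `G` is a `k`-chromatic graph of order `n`, then for every natural number `x`,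
`π(G,x) ≤ (x)_↓k · x^(n-k)`. -/
theorem numColorings_le_descFactorial_mul_pow {V : Type} [Fintype V] (G : SimpleGraph V)
    (n k : ℕ) (hn : Fintype.card V = n) (hk : G.chromaticNumber = k) (x : ℕ) :
    numColorings G x ≤ x.descFactorial k * x ^ (n - k) := by
  exact main_induction n V G hn k x hk
end

section
/- Let G be a simple graph on n vertices with chromatic number k, and let x be a natural number with x ≥ k. Then the number of proper x-colourings satisfies π(G,x) = (x)_↓k · x^(n−k) if and only if G is isomorphic to the disjoint union of the complete graph K_k and n−k isolated vertices. -/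
/-- The disjoint union of the complete graph `K_k` and `m` isolated vertices. -/
def cliquePlusIsolated (k m : ℕ) : SimpleGraph (Fin k ⊕ Fin m) where
  Adj a b := a ≠ b ∧ a.isLeft = true ∧ b.isLeft = true
  symm := ⟨fun _ _ ⟨h1, h2, h3⟩ => ⟨h1.symm, h3, h2⟩⟩
  loopless := ⟨fun _ ⟨h, _⟩ => h rfl⟩

namespace Tomescu

open Finset

set_option linter.unusedSectionVars false
set_option maxHeartbeats 1600000

variable {V : Type} [Fintype V]

/-- Induced subgraph on the complement of `A`. -/
def Gd (G : SimpleGraph V) (A : Finset V) : SimpleGraph {u : V // u ∉ A} :=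
  SimpleGraph.comap Subtype.val G

/-- `G` has chromatic number exactly `k`. -/
def ChromEq (G : SimpleGraph V) (k : ℕ) : Prop :=
  G.Colorable k ∧ ∀ m, G.Colorable m → k ≤ m





/-- `G` has chromatic number exactly `k`. -/

theorem chromEq_of_chromaticNumber {G : SimpleGraph V} {k : ℕ}
    (h : G.chromaticNumber = k) : ChromEq G k := by
  constructor
  · rw [← SimpleGraph.chromaticNumber_le_iff_colorable, h]
  · intro m hm
    have := hm.chromaticNumber_le
    rw [h, Nat.cast_le] at this
    exact this

theorem ChromEq.le_card {G : SimpleGraph V} {k : ℕ} (h : ChromEq G k) :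
    k ≤ Fintype.card V := h.2 _ G.colorable_of_fintype

theorem numColorings_congr {W : Type} [Fintype W] {G : SimpleGraph V} {H : SimpleGraph W}
    (e : G ≃g H) (x : ℕ) : numColorings G x = numColorings H x := by
  apply Nat.card_congr
  refine ⟨fun f => ⟨f.1 ∘ e.symm, ?_⟩, fun g => ⟨g.1 ∘ e, ?_⟩, ?_, ?_⟩
  · intro u w huw
    exact f.2 (e.symm.map_adj_iff.mpr huw)
  · intro u w huw
    exact g.2 (e.map_adj_iff.mpr huw)
  · intro f; ext u; simp
  · intro g; ext u; simp

theorem numColorings_pos {G : SimpleGraph V} {k x : ℕ} (h : G.Colorable k) (hkx : k ≤ x) :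
    1 ≤ numColorings G x := by
  obtain ⟨C⟩ := h.mono hkx
  have : Nonempty {f : V → Fin x // ∀ ⦃u w : V⦄, G.Adj u w → f u ≠ f w} :=
    ⟨⟨C, fun _ _ h => C.valid h⟩⟩
  have : 0 < Nat.card {f : V → Fin x // ∀ ⦃u w : V⦄, G.Adj u w → f u ≠ f w} :=
    Nat.card_pos
  exact this

/-- count of colorings of the model graph -/
theorem numColorings_cliquePlusIsolated (k m x : ℕ) :
    numColorings (cliquePlusIsolated k m) x = x.descFactorial k * x ^ m := by
  classical
  have e : {f : Fin k ⊕ Fin m → Fin x //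
      ∀ ⦃u w⦄, (cliquePlusIsolated k m).Adj u w → f u ≠ f w} ≃
      (Fin k ↪ Fin x) × (Fin m → Fin x) := by
    refine ⟨fun f => ⟨⟨fun i => f.1 (Sum.inl i), ?_⟩, fun j => f.1 (Sum.inr j)⟩,
      fun p => ⟨Sum.elim p.1 p.2, ?_⟩, ?_, ?_⟩
    · intro i j hij
      by_contra hne
      exact f.2 (show (cliquePlusIsolated k m).Adj (Sum.inl i) (Sum.inl j) from
        ⟨by simpa using hne, rfl, rfl⟩) hij
    · rintro u w ⟨hne, hu, hw⟩
      rcases u with i | i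
      · rcases w with j | j
        · simp only [Sum.elim_inl]
          exact p.1.injective.ne (by rintro rfl; exact hne rfl)
        · simp at hw
      · simp at hu
    · intro f; ext u; rcases u with i | i <;> rfl
    · intro p; ext <;> rfl
  rw [numColorings, Nat.card_congr e, Nat.card_prod, Nat.card_eq_fintype_card,
    Nat.card_eq_fintype_card, Fintype.card_embedding_eq, Fintype.card_fun]
  simp







/-- delete the vertex set `A` -/

@[simp] theorem Gd_adj {G : SimpleGraph V} {A : Finset V} {u w : {u : V // u ∉ A}} :
    (Gd G A).Adj u w ↔ G.Adj u.1 w.1 := Iff.rfl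

theorem nc_eq_filter_card (G : SimpleGraph V) (x : ℕ) [DecidableEq V]
    [DecidablePred fun f : V → Fin x => ∀ ⦃u w : V⦄, G.Adj u w → f u ≠ f w] :
    numColorings G x =
      (univ.filter fun f : V → Fin x => ∀ ⦃u w : V⦄, G.Adj u w → f u ≠ f w).card := by
  rw [numColorings, Nat.card_eq_fintype_card]
  convert Fintype.card_subtype _

/-- Colorings avoiding a fixed colour `a` are counted by `numColorings _ x`. -/
theorem card_avoid {U : Type} [Fintype U] (H : SimpleGraph U) (x : ℕ) (a : Fin (x+1)) :
    Nat.card {g : U → Fin (x+1) //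
        (∀ ⦃u w : U⦄, H.Adj u w → g u ≠ g w) ∧ ∀ u, g u ≠ a} = numColorings H x := by
  classical
  rw [numColorings]
  apply Nat.card_congr
  have hsome : ∀ (y : Fin (x+1)), y ≠ a → ((finSuccEquiv' a) y).isSome := by
    intro y hy
    rw [← Option.ne_none_iff_isSome]
    intro hnone
    exact hy ((finSuccEquiv' a).injective (by rw [hnone, finSuccEquiv'_at]))
  refine ⟨fun g => ⟨fun u => ((finSuccEquiv' a) (g.1 u)).get (hsome _ (g.2.2 u)), ?_⟩,
      fun h => ⟨fun u => (finSuccEquiv' a).symm (Option.some (h.1 u)), ?_, ?_⟩, ?_, ?_⟩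
  · intro u w hadj heq
    apply g.2.1 hadj
    have := congrArg Option.some heq
    rw [Option.some_get, Option.some_get] at this
    exact (finSuccEquiv' a).injective this
  · intro u w hadj heq
    exact h.2 hadj ((finSuccEquiv' a).symm.injective heq |> Option.some.inj)
  · intro u heq
    have := congrArg (finSuccEquiv' a) heq
    rw [Equiv.apply_symm_apply, finSuccEquiv'_at] at this
    exact Option.some_ne_none _ this
  · intro g
    ext u
    simp
  · intro h
    ext u
    simp

theorem fiber_count (G : SimpleGraph V) (v : V) (A : Finset V) (x : ℕ)
    (hv : v ∈ A) (hind : ∀ u ∈ A, ∀ w ∈ A, ¬ G.Adj u w)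
    [DecidablePred fun f : V → Fin (x+1) => ∀ ⦃u w : V⦄, G.Adj u w → f u ≠ f w]
    [DecidableEq V] :
    ((univ.filter fun f : V → Fin (x+1) => ∀ ⦃u w : V⦄, G.Adj u w → f u ≠ f w).filter
      (fun f => univ.filter (fun u => f u = f v) = A)).card
      = (x+1) * numColorings (Gd G A) x := by
  classical
  rw [filter_filter]
  rw [card_eq_sum_card_fiberwise (f := fun f : V → Fin (x+1) => f v)
    (t := (univ : Finset (Fin (x+1)))) (fun _ _ => mem_univ _)]
  have hconst : ∀ a : Fin (x+1),
      ((univ.filter fun f : V → Fin (x+1) =>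
          (∀ ⦃u w : V⦄, G.Adj u w → f u ≠ f w) ∧ univ.filter (fun u => f u = f v) = A).filter
        (fun f => f v = a)).card = numColorings (Gd G A) x := by
    intro a
    rw [filter_filter]
    rw [← card_avoid (Gd G A) x a]
    rw [← Fintype.card_subtype, ← Nat.card_eq_fintype_card]
    apply Nat.card_congr
    refine ⟨fun f => ⟨fun u => f.1 u.1, ?_, ?_⟩,
      fun g => ⟨fun u => if h : u ∈ A then a else g.1 ⟨u, h⟩, ⟨?_, ?_⟩, ?_⟩, ?_, ?_⟩
    · intro u w hadj
      exact f.2.1.1 hadj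
    · intro u heq
      have hz := Finset.ext_iff.mp f.2.1.2 u.1
      simp only [mem_filter, mem_univ, true_and] at hz
      exact u.2 (hz.mp (heq.trans f.2.2.symm))
    · intro u w hadj
      by_cases hu : u ∈ A <;> by_cases hw : w ∈ A
      · exact absurd hadj (hind u hu w hw)
      · simp only [dif_pos hu, dif_neg hw]
        exact fun heq => g.2.2 ⟨w, hw⟩ heq.symm
      · simp only [dif_pos hw, dif_neg hu]
        exact g.2.2 ⟨u, hu⟩
      · simp only [dif_neg hu, dif_neg hw]
        exact g.2.1 (show (Gd G A).Adj ⟨u, hu⟩ ⟨w, hw⟩ from hadj)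
    · ext z
      simp only [mem_filter, mem_univ, true_and, dif_pos hv]
      by_cases hz : z ∈ A
      · simp [dif_pos hz, hz]
      · simp only [dif_neg hz]
        exact ⟨fun h => absurd h (g.2.2 ⟨z, hz⟩), fun h => absurd h hz⟩
    · simp [dif_pos hv]
    · intro f
      apply Subtype.ext
      funext u
      dsimp only
      by_cases hu : u ∈ A
      · rw [dif_pos hu]
        have hz := Finset.ext_iff.mp f.2.1.2 u
        simp only [mem_filter, mem_univ, true_and] at hz
        exact ((hz.mpr hu).trans f.2.2).symm
      · rw [dif_neg hu]
    · intro g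
      apply Subtype.ext
      funext u
      dsimp only
      exact dif_neg u.2
  rw [Finset.sum_congr rfl (fun a _ => hconst a)]
  simp [mul_comm]

/-- The key recursion. -/
theorem key_identity (G : SimpleGraph V) (v : V) (x : ℕ) [DecidableEq V]
    [DecidableRel G.Adj] :
    numColorings G (x+1) = (x+1) *
      ∑ A ∈ (univ : Finset (Finset V)).filter
          (fun A => v ∈ A ∧ ∀ u ∈ A, ∀ w ∈ A, ¬G.Adj u w),
        numColorings (Gd G A) x := by
  classical
  rw [nc_eq_filter_card]
  rw [card_eq_sum_card_fiberwise (f := fun f : V → Fin (x+1) =>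
      univ.filter (fun u => f u = f v))
    (t := (univ : Finset (Finset V)).filter
      (fun A => v ∈ A ∧ ∀ u ∈ A, ∀ w ∈ A, ¬G.Adj u w)) ?_]
  · rw [Finset.mul_sum]
    apply Finset.sum_congr rfl
    intro A hA
    rw [mem_filter] at hA
    exact fiber_count G v A x hA.2.1 hA.2.2
  · intro f hf
    rw [Finset.mem_coe, mem_filter] at hf ⊢
    refine ⟨mem_univ _, by simp, ?_⟩
    intro u hu w hw hadj
    rw [mem_filter] at hu hw
    exact hf.2 hadj (hu.2.trans hw.2.symm)




/-- restriction of a coloring -/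
theorem Colorable.gd {G : SimpleGraph V} {m : ℕ} (h : G.Colorable m) (A : Finset V) :
    (Gd G A).Colorable m :=
  SimpleGraph.Colorable.of_hom
    (SimpleGraph.Embedding.comap ⟨Subtype.val, Subtype.val_injective⟩ G).toHom h

theorem Colorable.gd_mono {G : SimpleGraph V} {m : ℕ} {A B : Finset V} (hBA : B ⊆ A)
    (h : (Gd G B).Colorable m) : (Gd G A).Colorable m := by
  obtain ⟨C⟩ := h
  exact ⟨C.comp ⟨fun u => ⟨u.1, fun hm => u.2 (hBA hm)⟩, fun h => h⟩⟩

/-- extend a coloring of `G - A` by one fresh colour on the independent set `A` -/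
theorem Colorable.extend_indep {G : SimpleGraph V} {m : ℕ} {A : Finset V}
    (hind : ∀ u ∈ A, ∀ w ∈ A, ¬ G.Adj u w)
    (h : (Gd G A).Colorable m) : G.Colorable (m+1) := by
  classical
  obtain ⟨C⟩ := h
  refine ⟨SimpleGraph.Coloring.mk
    (fun u => if h : u ∈ A then Fin.last m else (C ⟨u, h⟩).castSucc) ?_⟩
  intro u w hadj
  by_cases hu : u ∈ A <;> by_cases hw : w ∈ A
  · exact absurd hadj (hind u hu w hw)
  · simp only [dif_pos hu, dif_neg hw]
    exact fun heq => absurd heq.symm (Fin.castSucc_lt_last _).ne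
  · simp only [dif_pos hw, dif_neg hu]
    exact (Fin.castSucc_lt_last _).ne
  · simp only [dif_neg hu, dif_neg hw]
    intro heq
    exact C.valid (show (Gd G A).Adj ⟨u, hu⟩ ⟨w, hw⟩ from hadj) (Fin.castSucc_inj.mp heq)

/-- extend a coloring of `G - v` over an isolated vertex `v`, keeping the colour count -/
theorem Colorable.extend_isolated {G : SimpleGraph V} {m : ℕ} {v : V}
    (hiso : ∀ w, ¬ G.Adj v w) (hne : Nonempty {u : V // u ∉ ({v} : Finset V)})
    (h : (Gd G ({v} : Finset V)).Colorable m) : G.Colorable m := by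
  classical
  obtain ⟨C⟩ := h
  obtain ⟨u₁⟩ := hne
  refine ⟨SimpleGraph.Coloring.mk
    (fun u => if h : u ∈ ({v} : Finset V) then C u₁ else C ⟨u, h⟩) ?_⟩
  intro u w hadj
  have hu : u ∉ ({v} : Finset V) := by
    simp only [mem_singleton]
    rintro rfl; exact hiso w hadj
  have hw : w ∉ ({v} : Finset V) := by
    simp only [mem_singleton]
    rintro rfl; exact hiso u (G.adj_symm hadj)
  simp only [dif_neg hu, dif_neg hw]
  exact C.valid (show (Gd G ({v} : Finset V)).Adj ⟨u, hu⟩ ⟨w, hw⟩ from hadj)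

/-- an isolated vertex multiplies the count by `x` -/
theorem nc_isolated [DecidableEq V] {G : SimpleGraph V} {v : V}
    (hiso : ∀ w, ¬ G.Adj v w) (x : ℕ) :
    numColorings G x = x * numColorings (Gd G ({v} : Finset V)) x := by
  classical
  have e : {f : V → Fin x // ∀ ⦃u w : V⦄, G.Adj u w → f u ≠ f w} ≃
      Fin x × {g : {u : V // u ∉ ({v} : Finset V)} → Fin x //
        ∀ ⦃a b⦄, (Gd G ({v} : Finset V)).Adj a b → g a ≠ g b} := by
    refine ⟨fun f => ⟨f.1 v, ⟨fun u => f.1 u.1, fun u w hadj => f.2 hadj⟩⟩,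
      fun p => ⟨fun u => if h : u ∈ ({v} : Finset V) then p.1 else p.2.1 ⟨u, h⟩, ?_⟩, ?_, ?_⟩
    · intro u w hadj
      have hu : u ∉ ({v} : Finset V) := by
        simp only [mem_singleton]; rintro rfl; exact hiso w hadj
      have hw : w ∉ ({v} : Finset V) := by
        simp only [mem_singleton]; rintro rfl; exact hiso u (G.adj_symm hadj)
      simp only [dif_neg hu, dif_neg hw]
      exact p.2.2 (show (Gd G ({v} : Finset V)).Adj ⟨u, hu⟩ ⟨w, hw⟩ from hadj)
    · intro f
      apply Subtype.ext
      funext u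
      dsimp only
      by_cases hu : u ∈ ({v} : Finset V)
      · rw [dif_pos hu]
        rw [mem_singleton] at hu
        rw [hu]
      · rw [dif_neg hu]
    · intro p
      apply Prod.ext
      · dsimp only
        rw [dif_pos (mem_singleton_self v)]
      · apply Subtype.ext
        funext u
        dsimp only
        exact dif_neg u.2
  rw [numColorings, Nat.card_congr e, Nat.card_prod, numColorings]
  simp

/-- a vertex with a neighbour multiplies the count by at most `x` (out of `x+1`) -/
theorem nc_le_of_adj [DecidableEq V] {G : SimpleGraph V} {v u₀ : V}
    (hadj : G.Adj v u₀) (x : ℕ) :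
    numColorings G (x+1) ≤ x * numColorings (Gd G ({v} : Finset V)) (x+1) := by
  classical
  have hvu : v ≠ u₀ := G.ne_of_adj hadj
  have hu₀ : u₀ ∉ ({v} : Finset V) := by simp [Ne.symm hvu]
  have hle : Nat.card {f : V → Fin (x+1) // ∀ ⦃u w : V⦄, G.Adj u w → f u ≠ f w} ≤
      Nat.card (Fin x × {g : {u : V // u ∉ ({v} : Finset V)} → Fin (x+1) //
        ∀ ⦃a b⦄, (Gd G ({v} : Finset V)).Adj a b → g a ≠ g b}) := by
    have hsome : ∀ (f : {f : V → Fin (x+1) // ∀ ⦃u w : V⦄, G.Adj u w → f u ≠ f w}),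
        ((finSuccEquiv' (f.1 u₀)) (f.1 v)).isSome := by
      intro f
      rw [← Option.ne_none_iff_isSome]
      intro hnone
      exact f.2 hadj ((finSuccEquiv' (f.1 u₀)).injective (by rw [hnone, finSuccEquiv'_at]))
    apply Nat.card_le_card_of_injective
      (f := fun f => ((((finSuccEquiv' (f.1 u₀)) (f.1 v)).get (hsome f) : Fin x),
      (⟨fun u => f.1 u.1, fun u w hadj' => f.2 hadj'⟩ :
        {g : {u : V // u ∉ ({v} : Finset V)} → Fin (x+1) //
          ∀ ⦃a b⦄, (Gd G ({v} : Finset V)).Adj a b → g a ≠ g b})))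
    intro f f' heq
    have h2 := congrArg Prod.snd heq
    have hrest : ∀ u : V, u ≠ v → f.1 u = f'.1 u := by
      intro u hu
      have hmem : u ∉ ({v} : Finset V) := by simp [hu]
      exact congrFun (congrArg Subtype.val h2) ⟨u, hmem⟩
    have hu₀eq : f.1 u₀ = f'.1 u₀ := hrest u₀ (Ne.symm hvu)
    have h1 := congrArg Prod.fst heq
    have hv : f.1 v = f'.1 v := by
      have hsg : Option.some (((finSuccEquiv' (f.1 u₀)) (f.1 v)).get (hsome f)) =
          Option.some (((finSuccEquiv' (f'.1 u₀)) (f'.1 v)).get (hsome f')) :=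
        congrArg Option.some h1
      rw [Option.some_get, Option.some_get, hu₀eq] at hsg
      exact (finSuccEquiv' (f'.1 u₀)).injective hsg
    apply Subtype.ext
    funext u
    by_cases hu : u = v
    · rw [hu]; exact hv
    · exact hrest u hu
  rw [Nat.card_prod] at hle
  rw [numColorings, numColorings]
  simpa using hle




theorem sum_powerset_pow [DecidableEq V] (W : Finset V) :
    ∀ s' : ℕ, W.card ≤ s' →
      ∑ B ∈ W.powerset, (fun B : Finset V => (y : ℕ) ^ (s' - B.card)) B
        = y ^ (s' - W.card) * (y+1) ^ W.card := by
  classical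
  induction W using Finset.induction_on with
  | empty => intro s' _; simp
  | @insert a W ha ih =>
    intro s' hcard
    rw [Finset.card_insert_of_notMem ha] at hcard
    have hW : W.card ≤ s' - 1 := by omega
    have hdisj : Disjoint W.powerset (Finset.image (insert a) W.powerset) := by
      rw [Finset.disjoint_left]
      intro B hB hB'
      rw [mem_powerset] at hB
      rw [mem_image] at hB'
      obtain ⟨B'', _, rfl⟩ := hB'
      exact ha (hB (mem_insert_self a B''))
    have hinj : ∀ B ∈ W.powerset, ∀ B' ∈ W.powerset,
        insert a B = insert a B' → B = B' := by
      intro B hB B' hB' heq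
      rw [mem_powerset] at hB hB'
      have hBa : a ∉ B := fun h => ha (hB h)
      have hB'a : a ∉ B' := fun h => ha (hB' h)
      rw [← Finset.erase_insert hBa, heq, Finset.erase_insert hB'a]
    rw [Finset.powerset_insert, Finset.sum_union hdisj, Finset.sum_image hinj]
    have h2 : ∀ B ∈ W.powerset, (y : ℕ) ^ (s' - (insert a B).card)
        = (fun B : Finset V => (y:ℕ) ^ (s' - 1 - B.card)) B := by
      intro B hB
      rw [mem_powerset] at hB
      have : a ∉ B := fun h => ha (hB h)
      rw [Finset.card_insert_of_notMem this]
      congr 1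
      omega
    rw [Finset.sum_congr rfl h2, ih (s'-1) hW, ih s' (by omega)]
    rw [Finset.card_insert_of_notMem ha]
    have e1 : s' - W.card = (s' - 1 - W.card) + 1 := by omega
    have e2 : s' - (W.card + 1) = s' - 1 - W.card := by omega
    rw [e1, e2, pow_succ]
    ring

/-- From a finset `K` of size `k` carrying all adjacency, build the isomorphism. -/
theorem iso_of_clique [DecidableEq V] (G : SimpleGraph V) (K : Finset V) (k : ℕ)
    (hK : K.card = k) (hadj : ∀ a b, G.Adj a b ↔ (a ≠ b ∧ a ∈ K ∧ b ∈ K)) :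
    Nonempty (G ≃g cliquePlusIsolated k (Fintype.card V - k)) := by
  classical
  have hk_le : k ≤ Fintype.card V := by
    rw [← hK, ← Finset.card_univ]
    exact Finset.card_le_card (Finset.subset_univ K)
  have hcard1 : Fintype.card {a : V // a ∈ K} = k := by
    rw [Fintype.card_coe, hK]
  have hcard2 : Fintype.card {a : V // a ∉ K} = Fintype.card V - k := by
    rw [Fintype.card_subtype_compl, hcard1]
  obtain ⟨e₁⟩ := Fintype.card_eq.mp (hcard1.trans (Fintype.card_fin k).symm)
  obtain ⟨e₂⟩ := Fintype.card_eq.mp (hcard2.trans (Fintype.card_fin _).symm)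
  let e : V ≃ (Fin k ⊕ Fin (Fintype.card V - k)) :=
    (Equiv.sumCompl (· ∈ K)).symm.trans (Equiv.sumCongr e₁ e₂)
  have hleft : ∀ a : V, (e a).isLeft = true ↔ a ∈ K := by
    intro a
    by_cases h : a ∈ K
    · simp only [e, Equiv.trans_apply, Equiv.sumCompl_symm_apply_of_pos h,
        Equiv.sumCongr_apply, Sum.map_inl, Sum.isLeft_inl]
      simp [h]
    · simp only [e, Equiv.trans_apply, Equiv.sumCompl_symm_apply_of_neg h,
        Equiv.sumCongr_apply, Sum.map_inr, Sum.isLeft_inr]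
      simp [h]
  refine ⟨⟨e, ?_⟩⟩
  intro a b
  show (cliquePlusIsolated _ _).Adj (e a) (e b) ↔ G.Adj a b
  rw [hadj]
  constructor
  · rintro ⟨hne, hl1, hl2⟩
    exact ⟨fun h => hne (by rw [h]), (hleft a).mp hl1, (hleft b).mp hl2⟩
  · rintro ⟨hne, h1, h2⟩
    exact ⟨fun h => hne (e.injective h), (hleft a).mpr h1, (hleft b).mpr h2⟩



theorem ChromEq.two_le {G : SimpleGraph V} {k : ℕ} (h : ChromEq G k) {u w : V}
    (hadj : G.Adj u w) : 2 ≤ k := by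
  by_contra hlt
  have h1 : G.Colorable 1 := h.1.mono (by omega)
  obtain ⟨C⟩ := h1
  exact C.valid hadj (Subsingleton.elim _ _)

theorem nc_edgeless {G : SimpleGraph V} (h : ∀ u w, ¬ G.Adj u w) (x : ℕ) :
    numColorings G x = x ^ Fintype.card V := by
  classical
  rw [numColorings]
  rw [Nat.card_congr (Equiv.subtypeUnivEquiv (fun f u w h' => absurd h' (h u w)))]
  rw [Nat.card_eq_fintype_card, Fintype.card_fun, Fintype.card_fin]

/-- critical vertex has degree at least `k-1` -/
theorem crit_deg [DecidableEq V] {G : SimpleGraph V} [DecidableRel G.Adj] {k : ℕ} (hch : ChromEq G k)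
    (hk2 : 2 ≤ k) {v : V} (hcol : (Gd G ({v} : Finset V)).Colorable (k-1)) :
    k - 1 ≤ (univ.filter (fun u => G.Adj v u)).card := by
  by_contra hlt
  push_neg at hlt
  obtain ⟨C⟩ := hcol
  set Nv := univ.filter (fun u => G.Adj v u) with hNv
  have hmem : ∀ u ∈ Nv, u ∉ ({v} : Finset V) := by
    intro u hu
    rw [hNv, mem_filter] at hu
    simp only [mem_singleton]
    exact fun h => G.loopless.irrefl v (h ▸ hu.2)
  set img : Finset (Fin (k-1)) :=
    Nv.attach.image (fun u => C ⟨u.1, hmem u.1 u.2⟩) with himg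
  have hcard : img.card < k - 1 := by
    calc img.card ≤ Nv.attach.card := Finset.card_image_le
    _ = Nv.card := Finset.card_attach
    _ < k - 1 := hlt
  have hex : ∃ b : Fin (k-1), b ∉ img := by
    by_contra hall
    push_neg at hall
    have : (univ : Finset (Fin (k-1))) ⊆ img := fun b _ => hall b
    have := Finset.card_le_card this
    rw [Finset.card_univ, Fintype.card_fin] at this
    omega
  obtain ⟨b, hb⟩ := hex
  have hcolG : G.Colorable (k-1) := by
    refine ⟨SimpleGraph.Coloring.mk
      (fun u => if h : u ∈ ({v} : Finset V) then b else C ⟨u, h⟩) ?_⟩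
    intro a c hadj
    have hCimg : ∀ z (hz : G.Adj v z), C ⟨z, hmem z (by rw [hNv]; simp [hz])⟩ ∈ img := by
      intro z hz
      rw [himg]
      exact Finset.mem_image.mpr ⟨⟨z, by rw [hNv]; simp [hz]⟩, mem_attach _ _, rfl⟩
    by_cases hac : a ∈ ({v} : Finset V) <;> by_cases hcc : c ∈ ({v} : Finset V)
    · rw [mem_singleton] at hac hcc
      exact absurd hadj (by rw [hac, hcc]; exact G.loopless.irrefl v)
    · rw [dif_pos hac, dif_neg hcc]
      rw [mem_singleton] at hac
      subst hac
      exact fun heq => hb (heq ▸ hCimg c hadj)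
    · rw [dif_neg hac, dif_pos hcc]
      rw [mem_singleton] at hcc
      subst hcc
      exact fun heq => hb (heq.symm ▸ hCimg a (G.adj_symm hadj))
    · rw [dif_neg hac, dif_neg hcc]
      exact C.valid (show (Gd G ({v} : Finset V)).Adj ⟨a, hac⟩ ⟨c, hcc⟩ from hadj)
  have := hch.2 _ hcolG
  omega




theorem cliquePlusIsolated_adj {k m : ℕ} {a b : Fin k ⊕ Fin m} :
    (cliquePlusIsolated k m).Adj a b ↔ a ≠ b ∧ a.isLeft = true ∧ b.isLeft = true := Iff.rfl

theorem build_iso [DecidableEq V] {G : SimpleGraph V} [DecidableRel G.Adj] {k m : ℕ}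
    (hch : ChromEq G k) (hk2 : 2 ≤ k) {v : V}
    (hdeg : (univ.filter (fun u => G.Adj v u)).card = k - 1)
    (ψ : Gd G ({v} : Finset V) ≃g cliquePlusIsolated (k-1) m) :
    Nonempty (G ≃g cliquePlusIsolated k (Fintype.card V - k)) := by
  classical
  set Nv := univ.filter (fun u => G.Adj v u) with hNvdef
  set Cs : Finset V := univ.image (fun i : Fin (k-1) => (ψ.symm (Sum.inl i)).1) with hCsdef
  have hvC : v ∉ Cs := by
    rw [hCsdef]
    simp only [mem_image, mem_univ, true_and]
    rintro ⟨i, hi⟩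
    exact (ψ.symm (Sum.inl i)).2 (by rw [hi]; exact mem_singleton_self v)
  have hmemC : ∀ (a : V) (ha : a ∉ ({v} : Finset V)),
      (a ∈ Cs ↔ (ψ ⟨a, ha⟩).isLeft = true) := by
    intro a ha
    rw [hCsdef]
    simp only [mem_image, mem_univ, true_and]
    constructor
    · rintro ⟨i, hi⟩
      have h1 : ψ.symm (Sum.inl i) = ⟨a, ha⟩ := Subtype.ext hi
      have h2 : ψ ⟨a, ha⟩ = Sum.inl i := by
        rw [← h1]; exact ψ.apply_symm_apply _
      rw [h2]; rfl
    · intro hl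
      obtain ⟨i, hi⟩ := Sum.isLeft_iff.mp hl
      refine ⟨i, ?_⟩
      rw [← hi, ψ.symm_apply_apply]
  have hF : ∀ (a b : V) (ha : a ∉ ({v} : Finset V)) (hb : b ∉ ({v} : Finset V)),
      (G.Adj a b ↔ (a ≠ b ∧ a ∈ Cs ∧ b ∈ Cs)) := by
    intro a b ha hb
    have h0 : G.Adj a b ↔ (Gd G ({v} : Finset V)).Adj ⟨a, ha⟩ ⟨b, hb⟩ := Iff.rfl
    rw [h0, ← ψ.map_adj_iff, cliquePlusIsolated_adj]
    rw [hmemC a ha, hmemC b hb]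
    constructor
    · rintro ⟨hne, h1, h2⟩
      refine ⟨?_, h1, h2⟩
      intro h; apply hne
      congr 1
      exact Subtype.ext h
    · rintro ⟨hne, h1, h2⟩
      refine ⟨?_, h1, h2⟩
      intro h
      exact hne (congrArg Subtype.val (ψ.toEquiv.injective h))
  have hcardC : Cs.card = k - 1 := by
    rw [hCsdef]
    rw [Finset.card_image_of_injective _ ?inj]
    · simp
    case inj =>
      intro i j hij
      exact Sum.inl_injective (ψ.symm.toEquiv.injective (Subtype.ext hij))
  have hCEQ : 3 ≤ k → Cs = Nv := by
    intro hk3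
    refine Finset.eq_of_subset_of_card_le ?_ (by rw [hdeg, hcardC])
    intro c hcC
    by_contra hcN
    have hcv : c ≠ v := fun h => hvC (h ▸ hcC)
    have hc' : c ∉ ({v} : Finset V) := by simpa using hcv
    obtain ⟨ic, hic⟩ : ∃ y, ψ ⟨c, hc'⟩ = Sum.inl y :=
      Sum.isLeft_iff.mp ((hmemC c hc').mp hcC)
    have hk1 : 2 ≤ k - 1 := by omega
    set z0 : Fin (k-1) := ⟨0, by omega⟩ with hz0
    set z1 : Fin (k-1) := ⟨1, by omega⟩ with hz1
    set σ := Equiv.swap z0 ic with hσ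
    set col : V → Fin (k-1) := fun u =>
      if hu : u ∈ ({v} : Finset V) then z0
      else Sum.elim (fun i => σ i) (fun _ => z1) (ψ ⟨u, hu⟩) with hcol
    have hvcol : col v = z0 := dif_pos (mem_singleton_self v)
    have hkey : ∀ b, G.Adj v b → col v ≠ col b := by
      intro b hb
      have hbv : b ∉ ({v} : Finset V) := by
        simp only [mem_singleton]
        exact fun h => G.loopless.irrefl v (h ▸ hb)
      rw [hvcol, hcol]
      simp only [dif_neg hbv]
      rcases hyb : ψ ⟨b, hbv⟩ with i | j
      · simp only [Sum.elim_inl]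
        intro heq
        have hine : i ≠ ic := by
          intro h
          subst h
          have : (⟨b, hbv⟩ : {u : V // u ∉ ({v} : Finset V)}) = ⟨c, hc'⟩ :=
            ψ.injective (hyb.trans hic.symm)
          have hbc : b = c := congrArg Subtype.val this
          apply hcN
          rw [← hbc, hNvdef]
          simp [hb]
        apply hine
        apply σ.injective
        rw [← heq, Equiv.swap_apply_right]
      · simp only [Sum.elim_inr]
        intro heq
        rw [hz0, hz1] at heq
        have := congrArg Fin.val heq
        simp at this
    have hcolG : G.Colorable (k-1) := by
      refine ⟨SimpleGraph.Coloring.mk col ?_⟩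
      intro a b hadj
      by_cases hav : a = v
      · subst hav; exact hkey b hadj
      · by_cases hbv : b = v
        · subst hbv
          exact (hkey a (G.adj_symm hadj)).symm
        · have ha' : a ∉ ({v} : Finset V) := by simpa using hav
          have hb' : b ∉ ({v} : Finset V) := by simpa using hbv
          obtain ⟨hne, haC, hbC⟩ := (hF a b ha' hb').mp hadj
          obtain ⟨ia, hia⟩ := Sum.isLeft_iff.mp ((hmemC a ha').mp haC)
          obtain ⟨ib, hib⟩ := Sum.isLeft_iff.mp ((hmemC b hb').mp hbC)
          rw [hcol]
          simp only [dif_neg ha', dif_neg hb', hia, hib, Sum.elim_inl]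
          intro heq
          have : ia = ib := σ.injective heq
          subst this
          exact hne (congrArg Subtype.val (ψ.injective (hia.trans hib.symm)))
    have := hch.2 _ hcolG
    omega
  have hvNv : v ∉ Nv := by rw [hNvdef]; simp
  have hsub : ∀ a b, G.Adj a b → a ∈ insert v Nv := by
    intro a b hadj
    by_cases hav : a = v
    · exact hav ▸ mem_insert_self v Nv
    · apply mem_insert_of_mem
      by_cases hbv : b = v
      · rw [hNvdef]
        simp only [mem_filter, mem_univ, true_and]
        exact G.adj_symm (hbv ▸ hadj)
      · have ha' : a ∉ ({v} : Finset V) := by simpa using hav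
        have hb' : b ∉ ({v} : Finset V) := by simpa using hbv
        obtain ⟨hne, haC, hbC⟩ := (hF a b ha' hb').mp hadj
        have hk3 : 3 ≤ k := by
          have h1 : 1 < Cs.card := Finset.one_lt_card.mpr ⟨a, haC, b, hbC, hne⟩
          omega
        rw [← hCEQ hk3]
        exact haC
  have hadjK : ∀ a b, G.Adj a b ↔ (a ≠ b ∧ a ∈ insert v Nv ∧ b ∈ insert v Nv) := by
    intro a b
    constructor
    · intro hadj
      exact ⟨G.ne_of_adj hadj, hsub a b hadj, hsub b a (G.adj_symm hadj)⟩
    · rintro ⟨hne, ha, hb⟩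
      rcases mem_insert.mp ha with hav | haN
      · rcases mem_insert.mp hb with hbv | hbN
        · exact absurd (hav.trans hbv.symm) hne
        · subst hav
          rw [hNvdef] at hbN
          simp only [mem_filter, mem_univ, true_and] at hbN
          exact hbN
      · rcases mem_insert.mp hb with hbv | hbN
        · subst hbv
          rw [hNvdef] at haN
          simp only [mem_filter, mem_univ, true_and] at haN
          exact G.adj_symm haN
        · by_cases hk3 : 3 ≤ k
          · rw [← hCEQ hk3] at haN hbN
            have hav : a ≠ v := fun h => hvC (h ▸ haN)
            have hbv : b ≠ v := fun h => hvC (h ▸ hbN)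
            exact (hF a b (by simpa using hav) (by simpa using hbv)).mpr ⟨hne, haN, hbN⟩
          · exfalso
            have hNc : Nv.card ≤ 1 := by omega
            exact hne (Finset.card_le_one.mp hNc a haN b hbN)
  have hcardK : (insert v Nv).card = k := by
    rw [Finset.card_insert_of_notMem hvNv, hdeg]
    omega
  exact iso_of_clique G _ k hcardK hadjK



theorem aux_edgeless {V : Type} [Fintype V] (G : SimpleGraph V) (k x : ℕ)
    (hch : ChromEq G k) (hkx : k ≤ x) (hedge : ∀ u w, ¬ G.Adj u w) :
    numColorings G x ≤ x.descFactorial k * x ^ (Fintype.card V - k) ∧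
    (numColorings G x = x.descFactorial k * x ^ (Fintype.card V - k) →
      Nonempty (G ≃g cliquePlusIsolated k (Fintype.card V - k))) := by
  classical
  rcases isEmpty_or_nonempty V with hV | hV
  · have hk0 : k = 0 := by
      have h0 : G.Colorable 0 :=
        ⟨SimpleGraph.Coloring.mk (fun u => isEmptyElim u) (fun {u} {w} _ => isEmptyElim u)⟩
      have := hch.2 0 h0
      omega
    have hn0 : Fintype.card V = 0 := Fintype.card_eq_zero
    have hnc : numColorings G x = 1 := by rw [nc_edgeless hedge, hn0, pow_zero]
    subst hk0
    have hb : x.descFactorial 0 * x ^ (Fintype.card V - 0) = 1 := by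
      rw [hn0]
      simp
    constructor
    · rw [hnc, hb]
    · intro _
      exact iso_of_clique G ∅ 0 rfl (fun a b => isEmptyElim a)
  · have hk1 : k = 1 := by
      have h1 : G.Colorable 1 :=
        ⟨SimpleGraph.Coloring.mk (fun _ => 0) (fun {u} {w} h => absurd h (hedge u w))⟩
      have hle := hch.2 1 h1
      have hne : k ≠ 0 := by
        intro h0
        obtain ⟨C⟩ := hch.1
        rw [h0] at C
        exact (C (Classical.arbitrary V)).elim0
      omega
    subst hk1
    have hn1 : 1 ≤ Fintype.card V := Fintype.card_pos
    have hb : x.descFactorial 1 * x ^ (Fintype.card V - 1) = x ^ Fintype.card V := by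
      rw [Nat.descFactorial_one, ← pow_succ']
      congr 1
      omega
    rw [nc_edgeless hedge, hb]
    refine ⟨le_refl _, fun _ => ?_⟩
    refine iso_of_clique G {Classical.arbitrary V} 1 (card_singleton _) ?_
    intro a b
    constructor
    · intro h
      exact absurd h (hedge a b)
    · rintro ⟨hne, ha, hb⟩
      rw [mem_singleton] at ha hb
      exact absurd (ha.trans hb.symm) hne

theorem aux (N : ℕ) : ∀ (V : Type) [Fintype V] (G : SimpleGraph V) (k x : ℕ),
    Fintype.card V ≤ N → ChromEq G k → k ≤ x →
    numColorings G x ≤ x.descFactorial k * x ^ (Fintype.card V - k) ∧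
    (numColorings G x = x.descFactorial k * x ^ (Fintype.card V - k) →
      Nonempty (G ≃g cliquePlusIsolated k (Fintype.card V - k))) := by
  induction N with
  | zero =>
    intro V _ G k x hcard hch hkx
    have hV : IsEmpty V := by
      rw [← Fintype.card_eq_zero_iff]
      omega
    exact aux_edgeless G k x hch hkx (fun u w h => isEmptyElim u)
  | succ N ih =>
    intro V instV G k x hcard hch hkx
    classical
    by_cases hedge : ∀ u w, ¬ G.Adj u w
    · exact aux_edgeless G k x hch hkx hedge
    push_neg at hedge
    obtain ⟨u₁, w₁, hadj₁⟩ := hedge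
    have hk2 : 2 ≤ k := hch.two_le hadj₁
    have hx2 : 2 ≤ x := le_trans hk2 hkx
    obtain ⟨x', rfl⟩ : ∃ x', x = x' + 1 := ⟨x - 1, by omega⟩
    have hkn : k ≤ Fintype.card V := hch.le_card
    have hn1 : 1 ≤ Fintype.card V := by omega
    have hcardGd : ∀ A : Finset V, Fintype.card {u : V // u ∉ A} = Fintype.card V - A.card := by
      intro A
      rw [Fintype.card_subtype_compl]
      congr 1
      exact Fintype.card_coe A
    by_cases hcrit : ∃ v : V, (Gd G ({v} : Finset V)).Colorable (k-1)
    · obtain ⟨v, hv⟩ := hcrit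
      have hid := key_identity G v x'
      have hvτ : ({v} : Finset V) ∈ (univ.filter (fun A : Finset V => v ∈ A ∧ ∀ u ∈ A, ∀ w ∈ A, ¬G.Adj u w)) := by
        rw [mem_filter]
        refine ⟨mem_univ _, mem_singleton_self v, ?_⟩
        intro u hu w hw
        rw [mem_singleton] at hu hw
        intro hadj
        rw [hu, hw] at hadj
        exact G.loopless.irrefl v hadj
      have hchA : ∀ A ∈ (univ.filter (fun A : Finset V => v ∈ A ∧ ∀ u ∈ A, ∀ w ∈ A, ¬G.Adj u w)), ChromEq (Gd G A) (k-1) := by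
        intro A hA
        rw [mem_filter] at hA
        refine ⟨Colorable.gd_mono (singleton_subset_iff.mpr hA.2.1) hv, ?_⟩
        intro m' hm'
        have := hch.2 (m'+1) (Colorable.extend_indep hA.2.2 hm')
        omega
      have hkx' : k - 1 ≤ x' := by omega
      have hAfacts : ∀ A ∈ (univ.filter (fun A : Finset V => v ∈ A ∧ ∀ u ∈ A, ∀ w ∈ A, ¬G.Adj u w)), 1 ≤ A.card ∧ k - 1 ≤ Fintype.card V - A.card := by
        intro A hA
        rw [mem_filter] at hA
        have h1 : 1 ≤ A.card := Finset.card_pos.mpr ⟨v, hA.2.1⟩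
        have h2 := (hchA A (by rw [mem_filter]; exact hA)).le_card
        rw [hcardGd A] at h2
        exact ⟨h1, h2⟩
      have hterm : ∀ A ∈ (univ.filter (fun A : Finset V => v ∈ A ∧ ∀ u ∈ A, ∀ w ∈ A, ¬G.Adj u w)), numColorings (Gd G A) x' ≤
          x'.descFactorial (k-1) * x' ^ (Fintype.card V - A.card - (k-1)) := by
        intro A hA
        have hc1 : Fintype.card {u : V // u ∉ A} ≤ N := by
          rw [hcardGd A]
          have := (hAfacts A hA).1
          omega
        have h1 := (ih {u : V // u ∉ A} (Gd G A) (k-1) x' hc1 (hchA A hA) hkx').1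
        rw [hcardGd A] at h1
        exact h1
      have hTU : (∑ A ∈ (univ.filter (fun A : Finset V => v ∈ A ∧ ∀ u ∈ A, ∀ w ∈ A, ¬G.Adj u w)), numColorings (Gd G A) x') ≤
          ∑ A ∈ (univ.filter (fun A : Finset V => v ∈ A ∧ ∀ u ∈ A, ∀ w ∈ A, ¬G.Adj u w)), x'.descFactorial (k-1) * x' ^ (Fintype.card V - A.card - (k-1)) :=
        Finset.sum_le_sum hterm
      have hdeg1 : k - 1 ≤ (univ.filter (fun u => G.Adj v u)).card := crit_deg hch hk2 hv
      have hvNv : v ∉ univ.filter (fun u => G.Adj v u) := by simp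
      have hWc : (univ.filter (fun u : V => u ≠ v ∧ ¬ G.Adj v u)) =
          (insert v (univ.filter (fun u => G.Adj v u)))ᶜ := by
        ext u
        simp only [mem_filter, mem_univ, true_and, Finset.mem_compl, mem_insert, not_or]
      have hNvn : (univ.filter (fun u => G.Adj v u)).card ≤ Fintype.card V - 1 := by
        have h3 : (insert v (univ.filter (fun u => G.Adj v u))).card ≤ Fintype.card V := by
          rw [← Finset.card_univ]
          exact Finset.card_le_card (subset_univ _)
        rw [Finset.card_insert_of_notMem hvNv] at h3
        omega
      have hcardsplit : (univ.filter (fun u : V => u ≠ v ∧ ¬ G.Adj v u)).card =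
          Fintype.card V - 1 - (univ.filter (fun u => G.Adj v u)).card := by
        rw [hWc, Finset.card_compl, Finset.card_insert_of_notMem hvNv]
        omega
      have hwle : (univ.filter (fun u : V => u ≠ v ∧ ¬ G.Adj v u)).card ≤ Fintype.card V - k := by
        omega
      have hAsub : ∀ A ∈ (univ.filter (fun A : Finset V => v ∈ A ∧ ∀ u ∈ A, ∀ w ∈ A, ¬G.Adj u w)), A.erase v ∈ (univ.filter (fun u : V => u ≠ v ∧ ¬ G.Adj v u)).powerset
          ∧ A.card = (A.erase v).card + 1 := by
        intro A hA
        have hA' := hA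
        rw [mem_filter] at hA'
        constructor
        · rw [mem_powerset]
          intro u hu
          rw [mem_erase] at hu
          rw [mem_filter]
          exact ⟨mem_univ _, hu.1, fun hadj => (hA'.2.2 v hA'.2.1 u hu.2) hadj⟩
        · rw [Finset.card_erase_of_mem hA'.2.1]
          have := (hAfacts A hA).1
          omega
      have hE1 : (∑ A ∈ (univ.filter (fun A : Finset V => v ∈ A ∧ ∀ u ∈ A, ∀ w ∈ A, ¬G.Adj u w)), x' ^ (Fintype.card V - A.card - (k-1)))
          = ∑ B ∈ (univ.filter (fun A : Finset V => v ∈ A ∧ ∀ u ∈ A, ∀ w ∈ A, ¬G.Adj u w)).image (fun A => A.erase v),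
              x' ^ ((Fintype.card V - k) - B.card) := by
        rw [Finset.sum_image ?inj]
        case inj =>
          intro A hA A' hA' (heq : A.erase v = A'.erase v)
          rw [Finset.mem_coe, mem_filter] at hA hA'
          rw [← Finset.insert_erase hA.2.1, heq, Finset.insert_erase hA'.2.1]
        apply Finset.sum_congr rfl
        intro A hA
        congr 1
        have h1 := (hAsub A hA).2
        have h2 := (hAfacts A hA).2
        have h3 : A.card ≤ Fintype.card V := by
          rw [← Finset.card_univ]
          exact Finset.card_le_card (subset_univ _)
        omega
      have hE2 : (∑ B ∈ (univ.filter (fun A : Finset V => v ∈ A ∧ ∀ u ∈ A, ∀ w ∈ A, ¬G.Adj u w)).image (fun A => A.erase v), x' ^ ((Fintype.card V - k) - B.card))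
          ≤ ∑ B ∈ (univ.filter (fun u : V => u ≠ v ∧ ¬ G.Adj v u)).powerset,
              x' ^ ((Fintype.card V - k) - B.card) := by
        apply Finset.sum_le_sum_of_subset
        intro B hB
        rw [mem_image] at hB
        obtain ⟨A, hA, rfl⟩ := hB
        exact (hAsub A hA).1
      have hE3 : (∑ B ∈ (univ.filter (fun u : V => u ≠ v ∧ ¬ G.Adj v u)).powerset,
              x' ^ ((Fintype.card V - k) - B.card))
          = x' ^ ((Fintype.card V - k) - (univ.filter (fun u : V => u ≠ v ∧ ¬ G.Adj v u)).card)
            * (x'+1) ^ (univ.filter (fun u : V => u ≠ v ∧ ¬ G.Adj v u)).card :=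
        sum_powerset_pow _ _ hwle
      have hE4 : x' ^ ((Fintype.card V - k) - (univ.filter (fun u : V => u ≠ v ∧ ¬ G.Adj v u)).card)
            * (x'+1) ^ (univ.filter (fun u : V => u ≠ v ∧ ¬ G.Adj v u)).card
          ≤ (x'+1) ^ (Fintype.card V - k) := by
        calc x' ^ ((Fintype.card V - k) - (univ.filter (fun u : V => u ≠ v ∧ ¬ G.Adj v u)).card)
            * (x'+1) ^ (univ.filter (fun u : V => u ≠ v ∧ ¬ G.Adj v u)).card
            ≤ (x'+1) ^ ((Fintype.card V - k) - (univ.filter (fun u : V => u ≠ v ∧ ¬ G.Adj v u)).card)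
            * (x'+1) ^ (univ.filter (fun u : V => u ≠ v ∧ ¬ G.Adj v u)).card := by
              apply Nat.mul_le_mul_right
              exact Nat.pow_le_pow_left (by omega) _
          _ = (x'+1) ^ (Fintype.card V - k) := by
              rw [← pow_add]
              congr 1
              omega
      have hEle : (∑ A ∈ (univ.filter (fun A : Finset V => v ∈ A ∧ ∀ u ∈ A, ∀ w ∈ A, ¬G.Adj u w)), x' ^ (Fintype.card V - A.card - (k-1)))
          ≤ (x'+1) ^ (Fintype.card V - k) := by
        rw [hE1]
        exact le_trans hE2 (le_trans (le_of_eq hE3) hE4)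
      have hUle : (∑ A ∈ (univ.filter (fun A : Finset V => v ∈ A ∧ ∀ u ∈ A, ∀ w ∈ A, ¬G.Adj u w)), x'.descFactorial (k-1) * x' ^ (Fintype.card V - A.card - (k-1)))
          ≤ x'.descFactorial (k-1) * (x'+1) ^ (Fintype.card V - k) := by
        rw [← Finset.mul_sum]
        exact Nat.mul_le_mul_left _ hEle
      have hTle : (∑ A ∈ (univ.filter (fun A : Finset V => v ∈ A ∧ ∀ u ∈ A, ∀ w ∈ A, ¬G.Adj u w)), numColorings (Gd G A) x')
          ≤ x'.descFactorial (k-1) * (x'+1) ^ (Fintype.card V - k) := le_trans hTU hUle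
      have hDFk : (x'+1).descFactorial k = (x'+1) * x'.descFactorial (k-1) := by
        conv_lhs => rw [show k = (k-1)+1 by omega]
        rw [Nat.succ_descFactorial_succ]
      have hDFpos : 0 < x'.descFactorial (k-1) := by
        rw [Nat.pos_iff_ne_zero]
        intro h0
        rw [Nat.descFactorial_eq_zero_iff_lt] at h0
        omega
      have hbound : numColorings G (x'+1) ≤
          (x'+1).descFactorial k * (x'+1) ^ (Fintype.card V - k) := by
        rw [hid, hDFk, mul_assoc]
        exact Nat.mul_le_mul_left _ hTle
      refine ⟨hbound, fun heq => ?_⟩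
      have hT : (∑ A ∈ (univ.filter (fun A : Finset V => v ∈ A ∧ ∀ u ∈ A, ∀ w ∈ A, ¬G.Adj u w)), numColorings (Gd G A) x')
          = x'.descFactorial (k-1) * (x'+1) ^ (Fintype.card V - k) := by
        apply Nat.eq_of_mul_eq_mul_left (show 0 < x'+1 by omega)
        rw [← hid, heq, hDFk, mul_assoc]
      have hUeq : (∑ A ∈ (univ.filter (fun A : Finset V => v ∈ A ∧ ∀ u ∈ A, ∀ w ∈ A, ¬G.Adj u w)), x'.descFactorial (k-1) * x' ^ (Fintype.card V - A.card - (k-1)))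
          = x'.descFactorial (k-1) * (x'+1) ^ (Fintype.card V - k) :=
        le_antisymm hUle (hT ▸ hTU)
      have hTeqU : (∑ A ∈ (univ.filter (fun A : Finset V => v ∈ A ∧ ∀ u ∈ A, ∀ w ∈ A, ¬G.Adj u w)), numColorings (Gd G A) x')
          = ∑ A ∈ (univ.filter (fun A : Finset V => v ∈ A ∧ ∀ u ∈ A, ∀ w ∈ A, ¬G.Adj u w)), x'.descFactorial (k-1) * x' ^ (Fintype.card V - A.card - (k-1)) :=
        hT.trans hUeq.symm
      have hpoint := (Finset.sum_eq_sum_iff_of_le hterm).mp hTeqU ({v} : Finset V) hvτ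
      have hEeq2 : (∑ A ∈ (univ.filter (fun A : Finset V => v ∈ A ∧ ∀ u ∈ A, ∀ w ∈ A, ¬G.Adj u w)), x' ^ (Fintype.card V - A.card - (k-1)))
          = (x'+1) ^ (Fintype.card V - k) := by
        apply Nat.eq_of_mul_eq_mul_left hDFpos
        rw [← Finset.mul_sum] at hUeq
        exact hUeq
      have hPeq : x' ^ ((Fintype.card V - k) - (univ.filter (fun u : V => u ≠ v ∧ ¬ G.Adj v u)).card)
            * (x'+1) ^ (univ.filter (fun u : V => u ≠ v ∧ ¬ G.Adj v u)).card
          = (x'+1) ^ (Fintype.card V - k) := by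
        apply le_antisymm hE4
        calc (x'+1) ^ (Fintype.card V - k)
            = ∑ B ∈ (univ.filter (fun A : Finset V => v ∈ A ∧ ∀ u ∈ A, ∀ w ∈ A, ¬G.Adj u w)).image (fun A => A.erase v), x' ^ ((Fintype.card V - k) - B.card) := by
              rw [← hE1, hEeq2]
          _ ≤ _ := le_trans hE2 (le_of_eq hE3)
      have hweq : (univ.filter (fun u : V => u ≠ v ∧ ¬ G.Adj v u)).card = Fintype.card V - k := by
        by_contra hne
        have hwlt : (univ.filter (fun u : V => u ≠ v ∧ ¬ G.Adj v u)).card < Fintype.card V - k :=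
          lt_of_le_of_ne hwle hne
        have hlt2 : x' ^ ((Fintype.card V - k) - (univ.filter (fun u : V => u ≠ v ∧ ¬ G.Adj v u)).card)
              * (x'+1) ^ (univ.filter (fun u : V => u ≠ v ∧ ¬ G.Adj v u)).card
            < (x'+1) ^ (Fintype.card V - k) := by
          calc x' ^ ((Fintype.card V - k) - (univ.filter (fun u : V => u ≠ v ∧ ¬ G.Adj v u)).card)
              * (x'+1) ^ (univ.filter (fun u : V => u ≠ v ∧ ¬ G.Adj v u)).card
              < (x'+1) ^ ((Fintype.card V - k) - (univ.filter (fun u : V => u ≠ v ∧ ¬ G.Adj v u)).card)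
              * (x'+1) ^ (univ.filter (fun u : V => u ≠ v ∧ ¬ G.Adj v u)).card := by
                apply mul_lt_mul_of_pos_right
                · exact Nat.pow_lt_pow_left (by omega) (by omega)
                · exact pow_pos (by omega) _
            _ = (x'+1) ^ (Fintype.card V - k) := by
                rw [← pow_add]
                congr 1
                omega
        exact absurd hPeq hlt2.ne
      have hdegeq : (univ.filter (fun u => G.Adj v u)).card = k - 1 := by
        omega
      have hcards1 : Fintype.card {u : V // u ∉ ({v} : Finset V)} = Fintype.card V - 1 := by
        rw [hcardGd]
        rw [card_singleton]
      rw [card_singleton] at hpoint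
      have hψ := (ih {u : V // u ∉ ({v} : Finset V)} (Gd G ({v} : Finset V)) (k-1) x'
          (by rw [hcards1]; omega) (hchA _ hvτ) hkx').2 (by rw [hcards1]; exact hpoint)
      obtain ⟨ψ⟩ := hψ
      exact build_iso hch hk2 hdegeq ψ
    · push_neg at hcrit
      have hchd : ChromEq (Gd G ({u₁} : Finset V)) k := by
        refine ⟨Colorable.gd hch.1 _, ?_⟩
        intro m' hm'
        by_contra hlt
        push_neg at hlt
        exact hcrit u₁ (hm'.mono (by omega))
      have hcards : Fintype.card {u : V // u ∉ ({u₁} : Finset V)} = Fintype.card V - 1 := by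
        rw [hcardGd]
        rw [card_singleton]
      have hkn1 : k ≤ Fintype.card V - 1 := by
        have := hchd.le_card
        rw [hcards] at this
        exact this
      have hIH := (ih {u : V // u ∉ ({u₁} : Finset V)} (Gd G ({u₁} : Finset V)) k (x'+1)
          (by rw [hcards]; omega) hchd hkx).1
      rw [hcards] at hIH
      have hub := nc_le_of_adj hadj₁ x'
      have hDpos : 1 ≤ (x'+1).descFactorial k * (x'+1) ^ (Fintype.card V - 1 - k) := by
        have h1 : 0 < (x'+1).descFactorial k := by
          rw [Nat.pos_iff_ne_zero]
          intro h0
          rw [Nat.descFactorial_eq_zero_iff_lt] at h0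
          omega
        have h2 : 0 < (x'+1) ^ (Fintype.card V - 1 - k) := pow_pos (by omega) _
        exact Nat.one_le_iff_ne_zero.mpr (Nat.mul_ne_zero h1.ne' h2.ne')
      have hchain : numColorings G (x'+1) <
          (x'+1).descFactorial k * (x'+1) ^ (Fintype.card V - k) := by
        calc numColorings G (x'+1)
            ≤ x' * numColorings (Gd G ({u₁} : Finset V)) (x'+1) := hub
          _ ≤ x' * ((x'+1).descFactorial k * (x'+1) ^ (Fintype.card V - 1 - k)) :=
              Nat.mul_le_mul_left _ hIH
          _ < (x'+1) * ((x'+1).descFactorial k * (x'+1) ^ (Fintype.card V - 1 - k)) := by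
              apply mul_lt_mul_of_pos_right (by omega)
              omega
          _ = (x'+1).descFactorial k * (x'+1) ^ (Fintype.card V - k) := by
              have he : Fintype.card V - k = (Fintype.card V - 1 - k) + 1 := by omega
              rw [he, pow_succ]
              ring
      exact ⟨hchain.le, fun heq => absurd heq hchain.ne⟩

end Tomescu

/-- If `G` is a `k`-chromatic graph of order `n` and `x ≥ k`, then
`π(G,x) = (x)_↓k · x^(n-k)` iff `G ≅ K_k ∪ (n-k)K_1`. -/
theorem numColorings_eq_iff_cliquePlusIsolated {V : Type} [Fintype V] (G : SimpleGraph V)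
    (n k : ℕ) (hn : Fintype.card V = n) (hk : G.chromaticNumber = k) (x : ℕ) (hx : k ≤ x) :
    numColorings G x = x.descFactorial k * x ^ (n - k) ↔
      Nonempty (G ≃g cliquePlusIsolated k (n - k)) := by
  subst hn
  have hch := Tomescu.chromEq_of_chromaticNumber hk
  constructor
  · intro heq
    exact (Tomescu.aux (Fintype.card V) V G k x le_rfl hch hx).2 heq
  · rintro ⟨e⟩
    rw [Tomescu.numColorings_congr e, Tomescu.numColorings_cliquePlusIsolated]
end

section
/- Let G be a connected simple graph on n ≥ 1 vertices. Then for every natural number x, the number of proper x-colourings of G satisfies π(G,x) ≤ x·(x−1)^(n−1). -/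
/-- If `G` is a connected graph of order `n ≥ 1`, then for every natural number `x`,
`π(G,x) ≤ x · (x-1)^(n-1)`. -/
theorem numColorings_le_of_connected {V : Type} [Fintype V] (G : SimpleGraph V)
    (n : ℕ) (hn : Fintype.card V = n) (hn1 : 1 ≤ n) (hconn : G.Connected) (x : ℕ) :
    numColorings G x ≤ x * (x - 1) ^ (n - 1) := by
  classical
  have hVne : Nonempty V := Fintype.card_pos_iff.mp (by omega)
  obtain ⟨r⟩ := hVne
  -- every vertex other than r has a neighbour strictly closer to r
  have hpar : ∀ v : {v : V // v ≠ r}, ∃ u, G.Adj v.1 u ∧ G.dist r u < G.dist r v.1 := by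
    rintro ⟨v, hv⟩
    obtain ⟨q, hq⟩ := (hconn v r).exists_walk_length_eq_dist
    have hd : 0 < G.dist r v := hconn.pos_dist_of_ne (Ne.symm hv)
    have hnn : ¬ q.Nil := by
      intro h
      have := SimpleGraph.Walk.nil_iff_length_eq.mp h
      rw [hq, SimpleGraph.dist_comm] at this
      omega
    obtain ⟨u, h, q', rfl⟩ := SimpleGraph.Walk.not_nil_iff.mp hnn
    refine ⟨u, h, ?_⟩
    show G.dist r u < G.dist r v
    have h1 : G.dist u r ≤ q'.length := SimpleGraph.dist_le q'
    have h2 : q'.length + 1 = G.dist v r := by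
      rw [← hq]; simp
    rw [SimpleGraph.dist_comm] at h1
    rw [SimpleGraph.dist_comm] at h2
    omega
  choose par hadj hlt using hpar
  -- the code of a colour relative to another (distinct) colour
  set code : Fin x → Fin x → ℕ := fun a b => if a.val < b.val then a.val else a.val - 1 with hcode
  have hcodelt : ∀ a b : Fin x, a ≠ b → code a b < x - 1 := by
    intro a b hab
    have ha := a.2
    have hb := b.2
    have hne : a.val ≠ b.val := fun h => hab (Fin.ext h)
    simp only [hcode]
    split <;> omega
  have hcodeinj : ∀ a a' b : Fin x, a ≠ b → a' ≠ b → code a b = code a' b → a = a' := by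
    intro a a' b hab ha'b h
    have hne : a.val ≠ b.val := fun h => hab (Fin.ext h)
    have hne' : a'.val ≠ b.val := fun h => ha'b (Fin.ext h)
    simp only [hcode] at h
    apply Fin.ext
    split at h <;> split at h <;> omega
  -- the encoding map
  set F : {f : V → Fin x // ∀ ⦃u w : V⦄, G.Adj u w → f u ≠ f w} →
      Fin x × ({v : V // v ≠ r} → Fin (x - 1)) :=
    fun f => (f.1 r, fun v => ⟨code (f.1 v.1) (f.1 (par v)), hcodelt _ _ (f.2 (hadj v))⟩) with hF
  have hFinj : Function.Injective F := by
    intro f g hfg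
    have h1 : f.1 r = g.1 r := congrArg Prod.fst hfg
    have h2 : ∀ v : {v : V // v ≠ r},
        code (f.1 v.1) (f.1 (par v)) = code (g.1 v.1) (g.1 (par v)) := by
      intro v
      have := congrFun (congrArg Prod.snd hfg) v
      simpa [hF] using congrArg Fin.val this
    have key : ∀ d : ℕ, ∀ v : V, G.dist r v = d → f.1 v = g.1 v := by
      intro d
      induction d using Nat.strong_induction_on with
      | _ d ih =>
        intro v hv
        by_cases hvr : v = r
        · subst hvr; exact h1
        · set v' : {v : V // v ≠ r} := ⟨v, hvr⟩
          have hp : f.1 (par v') = g.1 (par v') :=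
            ih (G.dist r (par v')) (hv ▸ hlt v') _ rfl
          have hc := h2 v'
          rw [hp] at hc
          have hfb : f.1 v'.1 ≠ g.1 (par v') := hp ▸ f.2 (hadj v')
          exact hcodeinj _ _ _ hfb (g.2 (hadj v')) hc
    exact Subtype.ext (funext fun v => key (G.dist r v) v rfl)
  have hle : numColorings G x ≤
      Nat.card (Fin x × ({v : V // v ≠ r} → Fin (x - 1))) :=
    Nat.card_le_card_of_injective F hFinj
  have hcard : Fintype.card {v : V // v ≠ r} = n - 1 := by
    rw [← hn]
    exact Set.card_ne_eq r
  calc numColorings G x ≤ _ := hle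
    _ = x * (x - 1) ^ (n - 1) := by
        simp [Nat.card_eq_fintype_card, Fintype.card_fun, hcard]
end

section
/- Let G be a connected simple graph on n vertices with chromatic number 3, and let x ≥ 3 be a natural number. If n is odd, then the number of proper x-colourings satisfies π(G,x) ≤ (x−1)^n − (x−1); if n is even, then π(G,x) ≤ (x−1)^n − (x−1)^2. -/
open Finset

lemma card_nz (x : ℕ) (hx : 0 < x) :
    Nat.card {z : ZMod x // z ≠ 0} = x - 1 := by
  classical
  have : NeZero x := ⟨hx.ne'⟩
  rw [Nat.card_eq_fintype_card]
  have h1 : Fintype.card {z : ZMod x // z = 0} = 1 := Fintype.card_subtype_eq 0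
  have h2 := Fintype.card_subtype_compl (fun z : ZMod x => z = 0)
  rw [h1, ZMod.card] at h2
  rw [← h2]

lemma aux_partition (x k : ℕ) (hx : 0 < x) :
    Nat.card {g : Fin k → {z : ZMod x // z ≠ 0} // ∑ i, ((g i : ZMod x)) = 0}
    + Nat.card {g : Fin k → {z : ZMod x // z ≠ 0} // ¬ ∑ i, ((g i : ZMod x)) = 0}
    = (x - 1) ^ k := by
  classical
  have : NeZero x := ⟨hx.ne'⟩
  rw [Nat.card_eq_fintype_card, Nat.card_eq_fintype_card, Fintype.card_subtype,
    Fintype.card_subtype, Finset.card_filter_add_card_filter_not, Finset.card_univ,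
    Fintype.card_fun, ← Nat.card_eq_fintype_card, card_nz x hx, Fintype.card_fin]

def snocEquiv (x k : ℕ) :
    {g : Fin (k+1) → {z : ZMod x // z ≠ 0} // ∑ i, ((g i : ZMod x)) = 0} ≃
    {g : Fin k → {z : ZMod x // z ≠ 0} // ¬ ∑ i, ((g i : ZMod x)) = 0} where
  toFun g := ⟨Fin.init g.1, by
    have h := g.2
    rw [Fin.sum_univ_castSucc] at h
    intro h0
    have : ((g.1 (Fin.last k) : ZMod x)) = 0 := by
      have h0' : ∑ i : Fin k, ((g.1 i.castSucc : ZMod x)) = 0 := h0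
      rw [h0', zero_add] at h
      exact h
    exact (g.1 (Fin.last k)).2 this⟩
  invFun g := ⟨Fin.snoc g.1 ⟨-∑ i, ((g.1 i : ZMod x)), neg_ne_zero.2 g.2⟩, by
    rw [Fin.sum_univ_castSucc]
    simp⟩
  left_inv g := by
    apply Subtype.ext
    have h := g.2
    rw [Fin.sum_univ_castSucc] at h
    funext i
    dsimp only
    refine Fin.lastCases ?_ (fun j => ?_) i
    · rw [Fin.snoc_last]
      apply Subtype.ext
      show -∑ i : Fin k, ((Fin.init g.1 i : ZMod x)) = ((g.1 (Fin.last k) : ZMod x))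
      exact neg_eq_of_add_eq_zero_right h
    · rw [Fin.snoc_castSucc]
      rfl
  right_inv g := by
    apply Subtype.ext
    dsimp only
    exact Fin.init_snoc _ _

lemma aux_key1 (x a b A cc y : ℕ) (h1 : a + b = cc + A) (h2 : b = A + y) :
    a + y = cc := by omega

lemma aux_key2 (x a b A cc y : ℕ) (h1 : a + b = cc + A) (h2 : b + y = A) :
    a = cc + y := by omega

lemma aux_formula (x : ℕ) (hx : 2 ≤ x) : ∀ k : ℕ,
    (Odd k → Nat.card {g : Fin k → {z : ZMod x // z ≠ 0} // ∑ i, ((g i : ZMod x)) = 0} * x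
      + (x - 1) = (x - 1) ^ k)
    ∧ (Even k → Nat.card {g : Fin k → {z : ZMod x // z ≠ 0} // ∑ i, ((g i : ZMod x)) = 0} * x
      = (x - 1) ^ k + (x - 1)) := by
  intro k
  induction k with
  | zero =>
    constructor
    · intro h; exact absurd h (by simp)
    · intro _
      have h0 : Nat.card {g : Fin 0 → {z : ZMod x // z ≠ 0} // ∑ i, ((g i : ZMod x)) = 0} = 1 := by
        rw [Nat.card_congr (Equiv.subtypeUnivEquiv (fun g => by simp))]
        rw [Nat.card_fun]
        simp
      rw [h0, pow_zero, one_mul]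
      clear h0
      omega
  | succ k ih =>
    have hpart := aux_partition x k (by omega)
    have hrec : Nat.card {g : Fin (k+1) → {z : ZMod x // z ≠ 0} // ∑ i, ((g i : ZMod x)) = 0}
        = Nat.card {g : Fin k → {z : ZMod x // z ≠ 0} // ¬ ∑ i, ((g i : ZMod x)) = 0} :=
      Nat.card_congr (snocEquiv x k)
    set N1 := Nat.card {g : Fin (k+1) → {z : ZMod x // z ≠ 0} // ∑ i, ((g i : ZMod x)) = 0} with hN1
    set N0 := Nat.card {g : Fin k → {z : ZMod x // z ≠ 0} // ∑ i, ((g i : ZMod x)) = 0} with hN0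
    have hsum : N1 + N0 = (x - 1) ^ k := by
      rw [hrec, Nat.add_comm]; exact hpart
    have hpow : (x - 1) ^ (k + 1) = (x - 1) ^ k * (x - 1) := pow_succ _ _
    have hAx : (x - 1) ^ k * x = (x - 1) ^ k * (x - 1) + (x - 1) ^ k := by
      have hxx : x = (x - 1) + 1 := (Nat.succ_pred_eq_of_pos (lt_of_lt_of_le Nat.zero_lt_two hx)).symm
      calc (x - 1) ^ k * x = (x - 1) ^ k * ((x - 1) + 1) := by rw [← hxx]
        _ = (x - 1) ^ k * (x - 1) + (x - 1) ^ k := by ring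
    have e1 : N1 * x + N0 * x = (x - 1) ^ k * (x - 1) + (x - 1) ^ k := by
      rw [← add_mul, hsum]; exact hAx
    constructor
    · intro hodd
      have hk : Even k := Nat.not_odd_iff_even.mp (Nat.odd_add_one.mp hodd)
      have h2 := ih.2 hk
      rw [hpow]
      exact aux_key1 x (N1 * x) (N0 * x) ((x - 1) ^ k) ((x - 1) ^ k * (x - 1)) (x - 1) e1 h2
    · intro heven
      have hk : Odd k := Nat.not_even_iff_odd.mp (Nat.even_add_one.mp heven)
      have h1 := ih.1 hk
      rw [hpow]
      exact aux_key2 x (N1 * x) (N0 * x) ((x - 1) ^ k) ((x - 1) ^ k * (x - 1)) (x - 1) e1 h1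

lemma exists_odd_closed_inj {V : Type} (G : SimpleGraph V) :
    ∀ K : ℕ, ∀ c : ℕ → V, Odd K → (∀ i < K, G.Adj (c i) (c (i+1))) → c K = c 0 →
    ∃ k, ∃ c' : ℕ → V, Odd k ∧ 0 < k ∧
      (∀ i < k, G.Adj (c' i) (c' (i+1))) ∧ c' k = c' 0 ∧
      (∀ i < k, ∀ j < k, c' i = c' j → i = j) := by
  intro K
  induction K using Nat.strong_induction_on with
  | _ K ih =>
    intro c hodd hadj hclose
    by_cases hinj : ∀ i < K, ∀ j < K, c i = c j → i = j
    · exact ⟨K, c, hodd, hodd.pos, hadj, hclose, hinj⟩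
    · push_neg at hinj
      obtain ⟨i, hi, j, hj, hceq, hne⟩ := hinj
      obtain ⟨i, j, hij, hi, hj, hceq⟩ : ∃ i j, i < j ∧ i < K ∧ j < K ∧ c i = c j := by
        rcases Nat.lt_or_ge i j with h | h
        · exact ⟨i, j, h, hi, hj, hceq⟩
        · exact ⟨j, i, by omega, hj, hi, hceq.symm⟩
      have hadj1 : ∀ m < j - i, G.Adj ((fun m => c (i + m)) m) ((fun m => c (i + m)) (m+1)) := by
        intro m hm
        have he : i + (m + 1) = (i + m) + 1 := by omega
        show G.Adj (c (i + m)) (c (i + (m+1)))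
        rw [he]
        exact hadj (i + m) (by omega)
      have hclose1 : (fun m => c (i + m)) (j - i) = (fun m => c (i + m)) 0 := by
        show c (i + (j - i)) = c (i + 0)
        have he : i + (j - i) = j := by omega
        rw [he, ← hceq, Nat.add_zero]
      set c2 : ℕ → V := fun m => if m ≤ i then c m else c (m + (j - i)) with hc2
      have hadj2 : ∀ m < K - (j - i), G.Adj (c2 m) (c2 (m+1)) := by
        intro m hm
        by_cases h1 : m < i
        · have e1 : c2 m = c m := if_pos (by omega)
          have e2 : c2 (m+1) = c (m+1) := if_pos (by omega)
          rw [e1, e2]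
          exact hadj m (by omega)
        · by_cases h2 : m = i
          · have e1 : c2 m = c m := if_pos (by omega)
            have e2 : c2 (m+1) = c (m + 1 + (j - i)) := if_neg (by omega)
            have he : m + 1 + (j - i) = j + 1 := by omega
            have hcm : c m = c j := by rw [h2, hceq]
            rw [e1, e2, he, hcm]
            exact hadj j hj
          · have e1 : c2 m = c (m + (j - i)) := if_neg (by omega)
            have e2 : c2 (m+1) = c (m + 1 + (j - i)) := if_neg (by omega)
            have he : m + 1 + (j - i) = (m + (j - i)) + 1 := by omega
            rw [e1, e2, he]
            exact hadj (m + (j - i)) (by omega)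
      have hclose2 : c2 (K - (j - i)) = c2 0 := by
        have e1 : c2 (K - (j - i)) = c (K - (j - i) + (j - i)) := if_neg (by omega)
        have e2 : c2 0 = c 0 := if_pos (by omega)
        have he : K - (j - i) + (j - i) = K := by omega
        rw [e1, e2, he, hclose]
      rcases Nat.even_or_odd (j - i) with h1 | h1
      · have h2 : Odd (K - (j - i)) := by
          rw [Nat.odd_iff] at hodd ⊢
          rw [Nat.even_iff] at h1
          omega
        exact ih (K - (j - i)) (by omega) c2 h2 hadj2 hclose2
      · exact ih (j - i) (by omega) (fun m => c (i + m)) h1 hadj1 hclose1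

/-- If `G` is a connected `3`-chromatic graph of order `n` and `x ≥ 3` is a natural number,
then `π(G,x) ≤ (x-1)^n - (x-1)` if `n` is odd, and `π(G,x) ≤ (x-1)^n - (x-1)^2` if `n`
is even. -/
theorem numColorings_le_of_connected_three_chromatic {V : Type} [Fintype V] (G : SimpleGraph V)
    (n : ℕ) (hn : Fintype.card V = n) (hconn : G.Connected)
    (hchrom : G.chromaticNumber = 3) (x : ℕ) (hx : 3 ≤ x) :
    (Odd n → numColorings G x ≤ (x - 1) ^ n - (x - 1)) ∧
    (Even n → numColorings G x ≤ (x - 1) ^ n - (x - 1) ^ 2) := by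
  classical
  subst hn
  have hxz : NeZero x := ⟨by omega⟩
  -- G is not 2-colorable
  have hnc2 : ¬ G.Colorable 2 := by
    intro h
    have h2 := h.chromaticNumber_le
    rw [hchrom] at h2
    norm_num at h2
  have hV : Nonempty V := hconn.nonempty
  obtain ⟨r⟩ := hV
  -- an edge joining two vertices at distances of equal parity from r
  have hedge : ∃ a b, G.Adj a b ∧ G.dist r a % 2 = G.dist r b % 2 := by
    by_contra hno
    push_neg at hno
    apply hnc2
    refine ⟨SimpleGraph.Coloring.mk (fun v => (⟨G.dist r v % 2, Nat.mod_lt _ (by omega)⟩ : Fin 2))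
      (fun {u w} h => ?_)⟩
    intro huw
    exact hno u w h (by simpa using congrArg Fin.val huw)
  obtain ⟨a, b, hab, hpar⟩ := hedge
  obtain ⟨wa, hwa⟩ := hconn.exists_walk_length_eq_dist r a
  obtain ⟨wb, hwb⟩ := hconn.exists_walk_length_eq_dist r b
  set W : G.Walk r r := wa.append ((wb.reverse).cons hab) with hW
  have hWlen : W.length = wa.length + (wb.length + 1) := by
    rw [hW, SimpleGraph.Walk.length_append, SimpleGraph.Walk.length_cons,
      SimpleGraph.Walk.length_reverse]
  have hWodd : Odd W.length := by
    rw [Nat.odd_iff, hWlen, hwa, hwb]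
    omega
  obtain ⟨k, c, hkodd, hkpos, hcadj, hcclose, hcinj⟩ :=
    exists_odd_closed_inj G W.length W.getVert hWodd
      (fun i hi => W.adj_getVert_succ hi)
      (by rw [SimpleGraph.Walk.getVert_length, SimpleGraph.Walk.getVert_zero])
  -- the cycle vertex set
  set S : Finset V := (Finset.range k).image c with hS
  have hScard : S.card = k := by
    rw [hS, Finset.card_image_of_injOn, Finset.card_range]
    intro i hi j hj h
    exact hcinj i (Finset.mem_range.mp (Finset.mem_coe.mp hi)) j
      (Finset.mem_range.mp (Finset.mem_coe.mp hj)) h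
  have hkn : k ≤ Fintype.card V := by
    rw [← hScard, ← Finset.card_univ]
    exact Finset.card_le_univ S
  set t := c 0 with ht
  have htS : t ∈ S := by
    rw [hS]
    exact Finset.mem_image.mpr ⟨0, Finset.mem_range.mpr hkpos, rfl⟩
  -- parents
  have hpar' : ∀ v, v ∉ S → ∃ u, G.Adj v u ∧ G.dist u t < G.dist v t := by
    intro v hv
    have hvt : v ≠ t := fun h => hv (h ▸ htS)
    obtain ⟨w, hw⟩ := hconn.exists_walk_length_eq_dist v t
    cases w with
    | nil => exact absurd rfl hvt
    | cons h q =>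
      refine ⟨_, h, ?_⟩
      have h1 := SimpleGraph.dist_le q
      rw [SimpleGraph.Walk.length_cons] at hw
      omega
  choose pf hpadj hpdist using hpar'
  -- colour equivalence
  set E : Fin x ≃ ZMod x := Fintype.equivOfCardEq (by simp [ZMod.card]) with hE
  -- the target of the injection
  set T := ({g : Fin k → {z : ZMod x // z ≠ 0} // ∑ i, ((g i : ZMod x)) = 0}
    × (ZMod x × ({v : V // v ∉ S} → {z : ZMod x // z ≠ 0}))) with hT
  set CS := {f : V → Fin x // ∀ ⦃u w : V⦄, G.Adj u w → f u ≠ f w} with hCS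
  have hnum : numColorings G x = Nat.card CS := rfl
  have hx1 : 1 ≤ x - 1 := by omega
  have hbound : numColorings G x ≤
      ((x - 1) ^ k - (x - 1)) * (x - 1) ^ (Fintype.card V - k) := by
    have hd : ∀ (f : CS) (i : Fin k), E (f.1 (c (i.1+1))) - E (f.1 (c i.1)) ≠ 0 := by
      intro f i
      refine sub_ne_zero.mpr (fun hEq => ?_)
      exact (f.2 (hcadj i.1 i.2)) (E.injective hEq).symm
    have hsum0 : ∀ f : CS, ∑ i : Fin k,
        (((⟨E (f.1 (c (i.1+1))) - E (f.1 (c i.1)), hd f i⟩ : {z : ZMod x // z ≠ 0})) : ZMod x)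
        = 0 := by
      intro f
      calc ∑ i : Fin k, (E (f.1 (c (i.1+1))) - E (f.1 (c i.1)))
          = ∑ i ∈ Finset.range k, (E (f.1 (c (i+1))) - E (f.1 (c i))) :=
            Fin.sum_univ_eq_sum_range (fun j => E (f.1 (c (j+1))) - E (f.1 (c j))) k
        _ = E (f.1 (c k)) - E (f.1 (c 0)) := Finset.sum_range_sub (fun j => E (f.1 (c j))) k
        _ = 0 := by rw [hcclose]; exact sub_self _
    have hvne : ∀ (f : CS) (v : {v : V // v ∉ S}),
        E (f.1 v.1) - E (f.1 (pf v.1 v.2)) ≠ 0 := by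
      intro f v
      refine sub_ne_zero.mpr (fun hEq => ?_)
      exact (f.2 (hpadj v.1 v.2)) (E.injective hEq)
    set Φ : CS → T := fun f =>
      (⟨fun i => ⟨E (f.1 (c (i.1+1))) - E (f.1 (c i.1)), hd f i⟩, hsum0 f⟩,
       E (f.1 t),
       fun v => ⟨E (f.1 v.1) - E (f.1 (pf v.1 v.2)), hvne f v⟩) with hPhi
    have hPhiInj : Function.Injective Φ := by
      intro f f' h
      rw [hPhi] at h
      have h1 : ∀ i : Fin k, E (f.1 (c (i.1+1))) - E (f.1 (c i.1))
          = E (f'.1 (c (i.1+1))) - E (f'.1 (c i.1)) :=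
        fun i => congrArg (fun z : T => ((z.1.1 i : ZMod x))) h
      have h2 : E (f.1 t) = E (f'.1 t) := congrArg (fun z : T => z.2.1) h
      have h3 : ∀ v : {v : V // v ∉ S}, E (f.1 v.1) - E (f.1 (pf v.1 v.2))
          = E (f'.1 v.1) - E (f'.1 (pf v.1 v.2)) :=
        fun v => congrArg (fun z : T => ((z.2.2 v : ZMod x))) h
      have hcyc : ∀ i, i < k → E (f.1 (c i)) = E (f'.1 (c i)) := by
        intro i
        induction i with
        | zero => intro _; exact h2
        | succ i ihi =>
          intro hik
          have hik' : i < k := Nat.lt_of_succ_lt hik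
          have hdi := h1 ⟨i, hik'⟩
          rw [ihi hik'] at hdi
          exact sub_left_inj.mp hdi
      have key : ∀ m : ℕ, ∀ v : V, G.dist v t = m → f.1 v = f'.1 v := by
        intro m
        induction m using Nat.strong_induction_on with
        | _ m ih' =>
          intro v hv
          by_cases hvS : v ∈ S
          · obtain ⟨i, hi, hci⟩ : ∃ i, i ∈ Finset.range k ∧ c i = v :=
              Finset.mem_image.mp (hS ▸ hvS)
            rw [← hci]
            exact E.injective (hcyc i (Finset.mem_range.mp hi))
          · have hpd := hpdist v hvS
            rw [hv] at hpd
            have hrec : f.1 (pf v hvS) = f'.1 (pf v hvS) :=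
              ih' (G.dist (pf v hvS) t) hpd _ rfl
            have h3v := h3 ⟨v, hvS⟩
            rw [hrec] at h3v
            exact E.injective (sub_left_inj.mp h3v)
      exact Subtype.ext (funext fun v => key (G.dist v t) v rfl)
    haveI hTfin : Finite T := by rw [hT]; infer_instance
    have hle : Nat.card CS ≤ Nat.card T := Nat.card_le_card_of_injective Φ hPhiInj
    have hvc : Nat.card {v : V // v ∉ S} = Fintype.card V - k := by
      rw [Nat.card_eq_fintype_card, Fintype.card_subtype_compl, Fintype.card_coe, hScard]
    have hcardT : Nat.card T =
        Nat.card {g : Fin k → {z : ZMod x // z ≠ 0} // ∑ i, ((g i : ZMod x)) = 0}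
          * (x * (x - 1) ^ (Fintype.card V - k)) := by
      rw [hT, Nat.card_prod, Nat.card_prod, Nat.card_zmod, Nat.card_fun,
        card_nz x (lt_of_lt_of_le (Nat.zero_lt_succ 2) hx), hvc]
    have hform := (aux_formula x (le_trans (by norm_num) hx) k).1 hkodd
    have hNkx : Nat.card {g : Fin k → {z : ZMod x // z ≠ 0} // ∑ i, ((g i : ZMod x)) = 0} * x
        = (x - 1) ^ k - (x - 1) := Nat.eq_sub_of_add_eq hform
    rw [hnum]
    refine hle.trans ?_
    rw [hcardT, ← mul_assoc, hNkx]
  have hfinal : ((x - 1) ^ k - (x - 1)) * (x - 1) ^ (Fintype.card V - k)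
      = (x - 1) ^ (Fintype.card V) - (x - 1) ^ (Fintype.card V - k + 1) := by
    rw [Nat.sub_mul, ← pow_add, ← pow_succ']
    congr 1
    rw [Nat.add_sub_cancel' hkn]
  rw [hfinal] at hbound
  constructor
  · intro hoddn
    refine hbound.trans (Nat.sub_le_sub_left ?_ _)
    exact Nat.le_self_pow (Nat.succ_ne_zero _) _
  · intro hevenn
    have hkne : k ≠ Fintype.card V := by
      intro hh
      rw [hh] at hkodd
      exact (Nat.not_odd_iff_even.mpr hevenn) hkodd
    refine hbound.trans (Nat.sub_le_sub_left ?_ _)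
    refine Nat.pow_le_pow_right hx1 ?_
    omega
end

section
/- Let G be a simple graph on n vertices with chromatic number k that has a vertex of degree n−1 (a universal vertex). Then for every natural number x, the number of proper x-colourings of G satisfies π(G,x) ≤ (x)_↓k · (x−1)^(n−k). -/
open Finset SimpleGraph

/-- the subtype of proper colorings (no `Fintype` needed). -/
private abbrev PC {V : Type} (G : SimpleGraph V) (x : ℕ) : Type :=
  {f : V → Fin x // ∀ ⦃u w : V⦄, G.Adj u w → f u ≠ f w}

private lemma colorable_succ_of_induce {V : Type} (G : SimpleGraph V) (T : Finset V)
    (hT : ∀ u ∈ T, ∀ z ∈ T, ¬ G.Adj u z) {c : ℕ}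
    (h : (G.induce {u : V | u ∉ T}).Colorable c) : G.Colorable (c + 1) := by
  classical
  obtain ⟨C⟩ := h
  refine ⟨SimpleGraph.Coloring.mk
      (fun u => if hu : u ∈ T then Fin.last c else (C ⟨u, hu⟩).castSucc) ?_⟩
  intro a b hab
  by_cases ha : a ∈ T <;> by_cases hb : b ∈ T
  · exact absurd hab (hT a ha b hb)
  · simp only [dif_pos ha, dif_neg hb]
    exact (Fin.castSucc_lt_last (C ⟨b, hb⟩)).ne'
  · simp only [dif_pos hb, dif_neg ha]
    exact (Fin.castSucc_lt_last (C ⟨a, ha⟩)).ne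
  · simp only [dif_neg ha, dif_neg hb]
    intro e
    exact C.valid (show (G.induce {u : V | u ∉ T}).Adj ⟨a, ha⟩ ⟨b, hb⟩ from hab)
      (Fin.castSucc_injective _ e)

set_option maxHeartbeats 1000000

private lemma greedy_colorable : ∀ (N : ℕ) (V : Type) [Fintype V] (G : SimpleGraph V)
    [DecidableRel G.Adj] (d : ℕ), Fintype.card V = N → (∀ v, G.degree v ≤ d) →
    G.Colorable (d + 1) := by
  intro N
  induction N with
  | zero =>
    intro V _ G _ d hN _
    have : IsEmpty V := Fintype.card_eq_zero_iff.mp hN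
    exact ⟨⟨isEmptyElim, fun {a} => isEmptyElim a⟩⟩
  | succ n IH =>
    intro V _ G _ d hN hdeg
    classical
    obtain ⟨v⟩ := Fintype.card_pos_iff.mp (show 0 < Fintype.card V by omega)
    set s : Set V := {u : V | u ∉ ({v} : Finset V)} with hs
    letI : Fintype ↥s := Fintype.ofFinite _
    letI instDR : DecidableRel (G.induce s).Adj :=
      fun a b => inferInstanceAs (Decidable (G.Adj a.1 b.1))
    have hcard : Fintype.card ↥s = n := by
      have h1 : Fintype.card ↥s = Fintype.card {u : V // u ≠ v} := by
        apply Fintype.card_congr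
        apply Equiv.subtypeEquivRight
        intro u
        simp [hs]
      rw [h1, Fintype.card_subtype_compl, Fintype.card_subtype_eq, hN]
      omega
    have hdeg' : ∀ u : ↥s, (G.induce s).degree u ≤ d := by
      intro u
      refine le_trans ?_ (hdeg u.1)
      unfold SimpleGraph.degree
      apply Finset.card_le_card_of_injOn (fun a => a.1)
      · intro a ha
        rw [Finset.mem_coe, SimpleGraph.mem_neighborFinset] at ha ⊢
        exact ha
      · intro a _ b _ h
        exact Subtype.ext h
    obtain ⟨C⟩ := IH ↥s (G.induce s) d hcard hdeg'
    have hmem : ∀ u ∈ G.neighborFinset v, u ∈ s := by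
      intro u hu
      rw [SimpleGraph.mem_neighborFinset] at hu
      simp [hs, hu.ne']
    set Nb : Finset (Fin (d + 1)) :=
      (G.neighborFinset v).attach.image (fun u => C ⟨u.1, hmem u.1 u.2⟩) with hNb
    have hNbcard : Nb.card ≤ d := by
      refine le_trans (Finset.card_image_le) ?_
      rw [Finset.card_attach]
      exact hdeg v
    obtain ⟨cfree, hcfree⟩ : ∃ cfree, cfree ∈ Nbᶜ := by
      apply Finset.card_pos.mp
      rw [Finset.card_compl]
      have : Fintype.card (Fin (d + 1)) = d + 1 := Fintype.card_fin _
      omega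
    rw [Finset.mem_compl] at hcfree
    refine ⟨SimpleGraph.Coloring.mk
        (fun u => if hu : u ∈ s then C ⟨u, hu⟩ else cfree) ?_⟩
    intro a b hab
    have hvmem : ∀ u, u ∉ s → u = v := by
      intro u hu
      simpa [hs] using hu
    by_cases ha : a ∈ s <;> by_cases hb : b ∈ s
    · simp only [dif_pos ha, dif_pos hb]
      exact C.valid (show (G.induce s).Adj ⟨a, ha⟩ ⟨b, hb⟩ from hab)
    · -- b = v
      simp only [dif_pos ha, dif_neg hb]
      have hbv := hvmem b hb
      subst hbv
      have haN : a ∈ G.neighborFinset b := by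
        rw [SimpleGraph.mem_neighborFinset]
        exact hab.symm
      intro e
      apply hcfree
      rw [← e, hNb]
      exact Finset.mem_image.mpr ⟨⟨a, haN⟩, Finset.mem_attach _ _, rfl⟩
    · simp only [dif_pos hb, dif_neg ha]
      have hav := hvmem a ha
      subst hav
      have hbN : b ∈ G.neighborFinset a := by
        rw [SimpleGraph.mem_neighborFinset]
        exact hab
      intro e
      apply hcfree
      rw [e, hNb]
      exact Finset.mem_image.mpr ⟨⟨b, hbN⟩, Finset.mem_attach _ _, rfl⟩
    · exact absurd (hvmem a ha ▸ hvmem b hb ▸ hab) (G.irrefl)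

private lemma decomp {V : Type} [Fintype V] [DecidableEq V] (G : SimpleGraph V)
    [DecidableRel G.Adj] (w : V) (m : ℕ) :
    Nat.card (PC G (m + 1)) ≤
      ∑ S ∈ (((G.neighborFinset w)ᶜ).erase w).powerset.filter
          (fun S => ∀ u ∈ S, ∀ z ∈ S, ¬ G.Adj u z),
        (m + 1) * Nat.card (PC (G.induce {u : V | u ∉ insert w S}) m) := by
  classical
  set 𝒮 : Finset (Finset V) := (((G.neighborFinset w)ᶜ).erase w).powerset.filter
      (fun S => ∀ u ∈ S, ∀ z ∈ S, ¬ G.Adj u z) with h𝒮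
  -- the color class of `w` minus `w` itself
  set Sf : PC G (m + 1) → Finset V := fun f =>
    univ.filter (fun u => u ≠ w ∧ Equiv.swap (f.1 w) (Fin.last m) (f.1 u) = Fin.last m)
    with hSf
  have hSf_mem : ∀ (f : PC G (m + 1)) (u : V), u ∈ Sf f ↔
      (u ≠ w ∧ Equiv.swap (f.1 w) (Fin.last m) (f.1 u) = Fin.last m) := by
    intro f u
    rw [hSf, mem_filter]
    simp only [mem_univ, true_and]
  have hmemS : ∀ f, Sf f ∈ 𝒮 := by
    intro f
    rw [h𝒮, mem_filter, mem_powerset]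
    constructor
    · intro u hu
      obtain ⟨hne, hL⟩ := (hSf_mem f u).mp hu
      rw [mem_erase, Finset.mem_compl]
      refine ⟨hne, ?_⟩
      rw [SimpleGraph.mem_neighborFinset]
      intro hadj
      have h1 : Equiv.swap (f.1 w) (Fin.last m) (f.1 w) = Fin.last m :=
        Equiv.swap_apply_left _ _
      exact f.2 hadj ((Equiv.swap (f.1 w) (Fin.last m)).injective (h1.trans hL.symm))
    · intro u hu z hz hadj
      exact f.2 hadj ((Equiv.swap (f.1 w) (Fin.last m)).injective
        (((hSf_mem f u).mp hu).2.trans (((hSf_mem f z).mp hz).2).symm))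
  have hne_last : ∀ (f : PC G (m + 1)) (a : ↥({u : V | u ∉ insert w (Sf f)})),
      Equiv.swap (f.1 w) (Fin.last m) (f.1 a.1) ≠ Fin.last m := by
    intro f a hL
    apply a.2
    rw [mem_insert]
    by_cases h : a.1 = w
    · exact Or.inl h
    · exact Or.inr ((hSf_mem f a.1).mpr ⟨h, hL⟩)
  have hgproper : ∀ (f : PC G (m + 1)),
      ∀ ⦃a b : ↥({u : V | u ∉ insert w (Sf f)})⦄,
      (G.induce {u : V | u ∉ insert w (Sf f)}).Adj a b →
      (Equiv.swap (f.1 w) (Fin.last m) (f.1 a.1)).castPred (hne_last f a) ≠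
      (Equiv.swap (f.1 w) (Fin.last m) (f.1 b.1)).castPred (hne_last f b) := by
    intro f a b hadj e
    have e2 := congrArg Fin.castSucc e
    rw [Fin.castSucc_castPred, Fin.castSucc_castPred] at e2
    exact f.2 (show G.Adj a.1 b.1 from hadj)
      ((Equiv.swap (f.1 w) (Fin.last m)).injective e2)
  -- the injection
  set Φ : PC G (m + 1) → Σ S : ↥𝒮, Fin (m + 1) × PC (G.induce {u : V | u ∉ insert w S.1}) m :=
    fun f => ⟨⟨Sf f, hmemS f⟩, f.1 w,
      ⟨fun a => (Equiv.swap (f.1 w) (Fin.last m) (f.1 a.1)).castPred (hne_last f a),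
        hgproper f⟩⟩ with hΦ
  have hdecode : ∀ f : PC G (m + 1), ∀ u : V,
      Equiv.swap ((Φ f).2.1) (Fin.last m)
        (if hu : u ∈ {x : V | x ∉ insert w ((Φ f).1.1)} then
          Fin.castSucc ((Φ f).2.2.1 ⟨u, hu⟩) else Fin.last m) = f.1 u := by
    intro f u
    by_cases hu : u ∈ {x : V | x ∉ insert w (Sf f)}
    · rw [dif_pos hu]
      show Equiv.swap (f.1 w) (Fin.last m) _ = f.1 u
      rw [Fin.castSucc_castPred]
      exact Equiv.swap_apply_self _ _ _
    · rw [dif_neg hu]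
      show Equiv.swap (f.1 w) (Fin.last m) (Fin.last m) = f.1 u
      have hu' : u ∈ insert w (Sf f) := not_not.mp hu
      rcases mem_insert.mp hu' with rfl | hS
      · exact Equiv.swap_apply_right _ _
      · have hL : Equiv.swap (f.1 w) (Fin.last m) (f.1 u) = Fin.last m := by
          rw [hSf] at hS
          exact (mem_filter.mp hS).2.2
        calc Equiv.swap (f.1 w) (Fin.last m) (Fin.last m)
            = Equiv.swap (f.1 w) (Fin.last m) (Equiv.swap (f.1 w) (Fin.last m) (f.1 u)) := by
              rw [hL]
          _ = f.1 u := Equiv.swap_apply_self _ _ _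
  have hinj : Function.Injective Φ := by
    intro f1 f2 h
    apply Subtype.ext
    funext u
    rw [← hdecode f1 u, ← hdecode f2 u, h]
  calc Nat.card (PC G (m + 1))
      ≤ Nat.card (Σ S : ↥𝒮, Fin (m + 1) × PC (G.induce {u : V | u ∉ insert w S.1}) m) :=
        Nat.card_le_card_of_injective Φ hinj
    _ = ∑ S : ↥𝒮, Nat.card (Fin (m + 1) × PC (G.induce {u : V | u ∉ insert w S.1}) m) := by
        rw [Nat.card_eq_fintype_card, Fintype.card_sigma]
        congr 1
        funext S
        rw [Nat.card_eq_fintype_card]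
    _ = ∑ S : ↥𝒮, (m + 1) * Nat.card (PC (G.induce {u : V | u ∉ insert w S.1}) m) := by
        congr 1
        funext S
        rw [Nat.card_prod, Nat.card_eq_fintype_card (α := Fin (m + 1)), Fintype.card_fin]
    _ = ∑ S ∈ 𝒮, (m + 1) * Nat.card (PC (G.induce {u : V | u ∉ insert w S}) m) :=
        Finset.sum_coe_sort 𝒮 (fun S => (m + 1) * Nat.card (PC (G.induce {u : V | u ∉ insert w S}) m))


private lemma powerset_sum_pow_le {V : Type} [DecidableEq V] (m : ℕ) (A : Finset V) :
    ∀ M : ℕ, A.card ≤ M → (∑ S ∈ A.powerset, m ^ (M - S.card)) ≤ (m + 1) ^ M := by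
  induction A using Finset.induction_on with
  | empty =>
    intro M _
    simp only [Finset.powerset_empty, Finset.sum_singleton, Finset.card_empty, Nat.sub_zero]
    exact Nat.pow_le_pow_left (by omega) M
  | @insert a A ha IH =>
    intro M hM
    rw [Finset.card_insert_of_notMem ha] at hM
    obtain ⟨M', rfl⟩ : ∃ M', M = M' + 1 := ⟨M - 1, by omega⟩
    have hA : A.card ≤ M' := by omega
    rw [Finset.powerset_insert, Finset.sum_union, Finset.sum_image]
    · have h1 : ∑ S ∈ A.powerset, m ^ (M' + 1 - S.card) =
          ∑ S ∈ A.powerset, m * m ^ (M' - S.card) := by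
        apply Finset.sum_congr rfl
        intro S hS
        have hSA : S.card ≤ M' := le_trans (Finset.card_le_card (Finset.mem_powerset.mp hS)) hA
        rw [← pow_succ']
        congr 1
        omega
      have h2 : ∑ S ∈ A.powerset, m ^ (M' + 1 - (insert a S).card) =
          ∑ S ∈ A.powerset, m ^ (M' - S.card) := by
        apply Finset.sum_congr rfl
        intro S hS
        have haS : a ∉ S := fun h => ha (Finset.mem_powerset.mp hS h)
        rw [Finset.card_insert_of_notMem haS]
        congr 1
        omega
      rw [h1, h2, ← Finset.sum_add_distrib]
      have h3 : ∑ S ∈ A.powerset, (m * m ^ (M' - S.card) + m ^ (M' - S.card)) =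
          (m + 1) * ∑ S ∈ A.powerset, m ^ (M' - S.card) := by
        rw [Finset.mul_sum]
        apply Finset.sum_congr rfl
        intro S _
        ring
      rw [h3, pow_succ']
      exact Nat.mul_le_mul_left _ (IH M' hA)
    · -- injectivity of insert on powerset
      intro S hS T hT hST
      have haS : a ∉ S := fun h => ha (Finset.mem_powerset.mp hS h)
      have haT : a ∉ T := fun h => ha (Finset.mem_powerset.mp hT h)
      have := congrArg (fun X => Finset.erase X a) hST
      simpa [Finset.erase_insert haS, Finset.erase_insert haT] using this
    · -- disjoint
      rw [Finset.disjoint_left]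
      intro S hS hS'
      obtain ⟨T, hT, rfl⟩ := Finset.mem_image.mp hS'
      have : a ∈ insert a T := Finset.mem_insert_self a T
      exact ha (Finset.mem_powerset.mp hS this)

private lemma key : ∀ (N : ℕ) (V : Type) [Fintype V] (G : SimpleGraph V) [DecidableRel G.Adj]
    (k y : ℕ), Fintype.card V = N → (∀ c, G.Colorable c → k ≤ c) →
    Nat.card (PC G y) ≤ y.descFactorial k * y ^ (N - k) := by
  intro N
  induction N using Nat.strong_induction_on with
  | _ N IH =>
    intro V _ G _ k y hN hchi
    classical
    cases k with
    | zero =>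
      calc Nat.card (PC G y) ≤ Nat.card (V → Fin y) :=
            Nat.card_le_card_of_injective Subtype.val Subtype.val_injective
        _ = y ^ N := by
            rw [Nat.card_fun, Nat.card_eq_fintype_card, Nat.card_eq_fintype_card,
              Fintype.card_fin, hN]
        _ ≤ 1 * y ^ (N - 0) := by simp
    | succ j =>
      have hV : Nonempty V := by
        rcases isEmpty_or_nonempty V with he | h
        · have : G.Colorable 0 := ⟨⟨isEmptyElim, fun {a} => isEmptyElim a⟩⟩
          have := hchi 0 this
          omega
        · exact h
      obtain ⟨v0⟩ := hV
      have hN1 : 1 ≤ N := by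
        rw [← hN]
        exact Fintype.card_pos_iff.mpr ⟨v0⟩
      cases y with
      | zero =>
        have : IsEmpty (PC G 0) := ⟨fun f => (f.1 v0).elim0⟩
        rw [Nat.card_of_isEmpty]
        exact Nat.zero_le _
      | succ m =>
        obtain ⟨w, hwdeg⟩ : ∃ w : V, j ≤ G.degree w := by
          by_contra hcon
          push_neg at hcon
          have hj1 : 1 ≤ j := by
            have := hcon v0
            omega
          have hcol : G.Colorable ((j - 1) + 1) := by
            apply greedy_colorable N V G (j - 1) hN
            intro v
            have := hcon v
            omega
          rw [Nat.sub_add_cancel hj1] at hcol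
          have := hchi j hcol
          omega
        have hkN : j + 1 ≤ N := by
          have : G.Colorable N := by
            rw [← hN]; exact G.colorable_of_fintype
          exact hchi N this
        have hdegN : G.degree w < N := by
          rw [← hN]; exact G.degree_lt_card_verts w
        have hwcompl : w ∈ (G.neighborFinset w)ᶜ := by
          rw [Finset.mem_compl, SimpleGraph.mem_neighborFinset]
          exact G.irrefl
        have hAcard : (((G.neighborFinset w)ᶜ).erase w).card ≤ N - (j + 1) := by
          rw [Finset.card_erase_of_mem hwcompl, Finset.card_compl, hN,
            SimpleGraph.card_neighborFinset_eq_degree]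
          omega
        -- per-term bound
        have hterm : ∀ S ∈ (((G.neighborFinset w)ᶜ).erase w).powerset.filter
            (fun S => ∀ u ∈ S, ∀ z ∈ S, ¬ G.Adj u z),
            (m + 1) * Nat.card (PC (G.induce {u : V | u ∉ insert w S}) m) ≤
            (m + 1) * (m.descFactorial j * m ^ ((N - (j + 1)) - S.card)) := by
          intro S hS
          rw [Finset.mem_filter, Finset.mem_powerset] at hS
          obtain ⟨hSA, hSind⟩ := hS
          have hwS : w ∉ S := fun h => (Finset.mem_erase.mp (hSA h)).1 rfl
          have hScard : S.card ≤ N - (j + 1) :=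
            le_trans (Finset.card_le_card hSA) hAcard
          apply Nat.mul_le_mul_left
          -- set up instances for the induced graph
          letI : Fintype ↥({u : V | u ∉ insert w S}) := Fintype.ofFinite _
          letI : DecidableRel (G.induce {u : V | u ∉ insert w S}).Adj :=
            fun a b => inferInstanceAs (Decidable (G.Adj a.1 b.1))
          have hcard2 : Fintype.card ↥({u : V | u ∉ insert w S}) = N - (S.card + 1) := by
            rw [Fintype.card_of_subtype ((insert w S)ᶜ)
              (fun x => by simp [Set.mem_setOf_eq])]
            rw [Finset.card_compl, hN, Finset.card_insert_of_notMem hwS]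
          have hchi' : ∀ c, (G.induce {u : V | u ∉ insert w S}).Colorable c → j ≤ c := by
            intro c hc
            have hT : ∀ u ∈ insert w S, ∀ z ∈ insert w S, ¬ G.Adj u z := by
              intro u hu z hz
              rcases Finset.mem_insert.mp hu with rfl | hu' <;>
                rcases Finset.mem_insert.mp hz with rfl | hz'
              · exact G.irrefl
              · have := Finset.mem_compl.mp (Finset.mem_erase.mp (hSA hz')).2
                rw [SimpleGraph.mem_neighborFinset] at this
                exact this
              · have := Finset.mem_compl.mp (Finset.mem_erase.mp (hSA hu')).2
                rw [SimpleGraph.mem_neighborFinset] at this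
                intro hadj
                exact this hadj.symm
              · exact hSind u hu' z hz'
            have hcol := colorable_succ_of_induce G (insert w S) hT hc
            have := hchi (c + 1) hcol
            omega
          have hlt : N - (S.card + 1) < N := by omega
          have hIH := IH (N - (S.card + 1)) hlt ↥({u : V | u ∉ insert w S})
            (G.induce {u : V | u ∉ insert w S}) j m hcard2 hchi'
          have hexp : (N - (S.card + 1)) - j = (N - (j + 1)) - S.card := by omega
          rw [hexp] at hIH
          exact hIH
        calc Nat.card (PC G (m + 1))
            ≤ ∑ S ∈ (((G.neighborFinset w)ᶜ).erase w).powerset.filter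
                (fun S => ∀ u ∈ S, ∀ z ∈ S, ¬ G.Adj u z),
              (m + 1) * Nat.card (PC (G.induce {u : V | u ∉ insert w S}) m) :=
              decomp G w m
          _ ≤ ∑ S ∈ (((G.neighborFinset w)ᶜ).erase w).powerset.filter
                (fun S => ∀ u ∈ S, ∀ z ∈ S, ¬ G.Adj u z),
              (m + 1) * (m.descFactorial j * m ^ ((N - (j + 1)) - S.card)) :=
              Finset.sum_le_sum hterm
          _ ≤ ∑ S ∈ (((G.neighborFinset w)ᶜ).erase w).powerset,
              (m + 1) * (m.descFactorial j * m ^ ((N - (j + 1)) - S.card)) :=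
              Finset.sum_le_sum_of_subset (Finset.filter_subset _ _)
          _ = (m + 1) * m.descFactorial j * ∑ S ∈ (((G.neighborFinset w)ᶜ).erase w).powerset,
              m ^ ((N - (j + 1)) - S.card) := by
              rw [Finset.mul_sum]
              apply Finset.sum_congr rfl
              intro S _
              ring
          _ ≤ (m + 1) * m.descFactorial j * (m + 1) ^ (N - (j + 1)) := by
              apply Nat.mul_le_mul_left
              exact powerset_sum_pow_le m _ _ hAcard
          _ = (m + 1).descFactorial (j + 1) * (m + 1) ^ (N - (j + 1)) := by
              rw [Nat.succ_descFactorial_succ]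

/-- If `G` is a `k`-chromatic graph of order `n` with a universal vertex (a vertex of
degree `n-1`), then for every natural number `x`, `π(G,x) ≤ (x)_↓k · (x-1)^(n-k)`. -/
theorem numColorings_le_of_universal_vertex {V : Type} [Fintype V] (G : SimpleGraph V)
    [DecidableRel G.Adj] (n k : ℕ) (hn : Fintype.card V = n)
    (hk : G.chromaticNumber = k) (huniv : ∃ v : V, G.degree v = n - 1) (x : ℕ) :
    numColorings G x ≤ x.descFactorial k * (x - 1) ^ (n - k) := by
  classical
  obtain ⟨v, hv⟩ := huniv
  have hchi : ∀ c, G.Colorable c → k ≤ c := by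
    intro c hc
    have h1 := hc.chromaticNumber_le
    rw [hk] at h1
    exact_mod_cast h1
  have hn1 : 1 ≤ n := by
    rw [← hn]
    exact Fintype.card_pos_iff.mpr ⟨v⟩
  have hk1 : 1 ≤ k := by
    by_contra h
    have hk0 : k = 0 := by omega
    have hcol : G.Colorable (ENat.toNat G.chromaticNumber) :=
      SimpleGraph.colorable_chromaticNumber G.colorable_of_fintype
    rw [hk, hk0] at hcol
    simp only [Nat.cast_zero, ENat.toNat_zero] at hcol
    obtain ⟨C⟩ := hcol
    exact (C v).elim0
  have hkn : k ≤ n := by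
    apply hchi n
    rw [← hn]
    exact G.colorable_of_fintype
  obtain ⟨j, rfl⟩ : ∃ j, k = j + 1 := ⟨k - 1, by omega⟩
  cases x with
  | zero =>
    have : IsEmpty (PC G 0) := ⟨fun f => (f.1 v).elim0⟩
    show Nat.card (PC G 0) ≤ _
    rw [Nat.card_of_isEmpty]
    exact Nat.zero_le _
  | succ m =>
    -- universality: every `u ≠ v` is adjacent to `v`
    have hadj : ∀ u, u ≠ v → G.Adj v u := by
      have hsub : G.neighborFinset v ⊆ Finset.univ.erase v := by
        intro u hu
        rw [SimpleGraph.mem_neighborFinset] at hu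
        rw [Finset.mem_erase]
        exact ⟨hu.ne', Finset.mem_univ u⟩
      have hcards : (Finset.univ.erase v).card ≤ (G.neighborFinset v).card := by
        rw [Finset.card_erase_of_mem (Finset.mem_univ v), Finset.card_univ, hn,
          SimpleGraph.card_neighborFinset_eq_degree, hv]
      have heq := Finset.eq_of_subset_of_card_le hsub hcards
      intro u hune
      have hmem : u ∈ Finset.univ.erase v := Finset.mem_erase.mpr ⟨hune, Finset.mem_univ u⟩
      rw [← heq, SimpleGraph.mem_neighborFinset] at hmem
      exact hmem
    have hA0 : ((G.neighborFinset v)ᶜ).erase v = ∅ := by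
      rw [Finset.eq_empty_iff_forall_notMem]
      intro u hu
      rw [Finset.mem_erase, Finset.mem_compl, SimpleGraph.mem_neighborFinset] at hu
      exact hu.2 (hadj u hu.1)
    have hdec := decomp G v m
    rw [hA0] at hdec
    have hPempty : (∀ u ∈ (∅ : Finset V), ∀ z ∈ (∅ : Finset V), ¬ G.Adj u z) :=
      fun u hu => absurd hu (Finset.notMem_empty u)
    rw [Finset.powerset_empty, Finset.filter_singleton, if_pos hPempty,
      Finset.sum_singleton] at hdec
    -- apply the key lemma to the induced graph
    letI : Fintype ↥({u : V | u ∉ insert v (∅ : Finset V)}) := Fintype.ofFinite _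
    letI : DecidableRel (G.induce {u : V | u ∉ insert v (∅ : Finset V)}).Adj :=
      fun a b => inferInstanceAs (Decidable (G.Adj a.1 b.1))
    have hcard2 : Fintype.card ↥({u : V | u ∉ insert v (∅ : Finset V)}) = n - 1 := by
      rw [Fintype.card_of_subtype ((insert v (∅ : Finset V))ᶜ)
        (fun x => by simp [Set.mem_setOf_eq])]
      rw [Finset.card_compl, hn, Finset.card_insert_of_notMem (Finset.notMem_empty v),
        Finset.card_empty]
    have hchi' : ∀ c, (G.induce {u : V | u ∉ insert v (∅ : Finset V)}).Colorable c → j ≤ c := by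
      intro c hc
      have hT : ∀ u ∈ insert v (∅ : Finset V), ∀ z ∈ insert v (∅ : Finset V), ¬ G.Adj u z := by
        intro u hu z hz
        rcases Finset.mem_insert.mp hu with rfl | hu'
        · rcases Finset.mem_insert.mp hz with rfl | hz'
          · exact G.irrefl
          · exact absurd hz' (Finset.notMem_empty z)
        · exact absurd hu' (Finset.notMem_empty u)
      have hcol := colorable_succ_of_induce G (insert v ∅) hT hc
      have := hchi (c + 1) hcol
      omega
    have hkey := key (n - 1) ↥({u : V | u ∉ insert v (∅ : Finset V)})
      (G.induce {u : V | u ∉ insert v (∅ : Finset V)}) j m hcard2 hchi'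
    show Nat.card (PC G (m + 1)) ≤ _
    calc Nat.card (PC G (m + 1))
        ≤ (m + 1) * Nat.card (PC (G.induce {u : V | u ∉ insert v (∅ : Finset V)}) m) := hdec
      _ ≤ (m + 1) * (m.descFactorial j * m ^ ((n - 1) - j)) :=
          Nat.mul_le_mul_left _ hkey
      _ = (m + 1).descFactorial (j + 1) * m ^ ((n - 1) - j) := by
          rw [Nat.succ_descFactorial_succ, mul_assoc]
      _ = (m + 1).descFactorial (j + 1) * (m + 1 - 1) ^ (n - (j + 1)) := by
          congr 2
          omega
end

section
/- Let G be a simple graph on n vertices with m edges, and let i be an integer with 1 ≤ i ≤ n−1. Then the number of i-colour partitions of G satisfies a_i(G) ≤ (C(n,2) − m)^(n−i) / (n−i)!. -/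
open Finset

section Aux

variable {V : Type} [Fintype V] [DecidableEq V] [LinearOrder V]

/-- The minimum of the part containing `v`. -/
noncomputable def fpmin (P : Finpartition (Finset.univ : Finset V)) (v : V) : V :=
  (P.part v).min' ⟨v, P.mem_part (mem_univ v)⟩

lemma fpmin_mem (P : Finpartition (Finset.univ : Finset V)) (v : V) :
    fpmin P v ∈ P.part v := Finset.min'_mem _ _

lemma fpmin_le (P : Finpartition (Finset.univ : Finset V)) (v : V) :
    fpmin P v ≤ v := Finset.min'_le _ _ (P.mem_part (mem_univ v))

lemma part_fpmin (P : Finpartition (Finset.univ : Finset V)) (v : V) :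
    P.part (fpmin P v) = P.part v :=
  P.part_eq_of_mem (P.part_mem.2 (mem_univ v)) (fpmin_mem P v)

lemma fpmin_congr (P : Finpartition (Finset.univ : Finset V)) {u v : V}
    (h : P.part u = P.part v) : fpmin P u = fpmin P v := by
  unfold fpmin; congr 1

lemma fpmin_fpmin (P : Finpartition (Finset.univ : Finset V)) (v : V) :
    fpmin P (fpmin P v) = fpmin P v := fpmin_congr P (part_fpmin P v)

lemma part_eq_filter (P : Finpartition (Finset.univ : Finset V)) (v : V) :
    P.part v = Finset.univ.filter (fun u => fpmin P u = fpmin P v) := by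
  ext u
  simp only [mem_filter, mem_univ, true_and]
  constructor
  · intro hu
    exact fpmin_congr P (P.part_eq_of_mem (P.part_mem.2 (mem_univ v)) hu)
  · intro hu
    have h1 : fpmin P u ∈ P.part u := fpmin_mem P u
    have h2 : fpmin P u ∈ P.part v := hu ▸ fpmin_mem P v
    have := P.eq_of_mem_parts (P.part_mem.2 (mem_univ u)) (P.part_mem.2 (mem_univ v)) h1 h2
    exact this ▸ P.mem_part (mem_univ u)

/-- The star edges of the partition. -/
noncomputable def sedges (P : Finpartition (Finset.univ : Finset V)) : Finset (Sym2 V) :=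
  (Finset.univ.filter (fun v => fpmin P v ≠ v)).image (fun v => s(fpmin P v, v))

lemma mem_sedges {P : Finpartition (Finset.univ : Finset V)} {e : Sym2 V} :
    e ∈ sedges P ↔ ∃ v, fpmin P v ≠ v ∧ e = s(fpmin P v, v) := by
  simp only [sedges, mem_image, mem_filter, mem_univ, true_and]
  constructor
  · rintro ⟨v, hv, rfl⟩; exact ⟨v, hv, rfl⟩
  · rintro ⟨v, hv, rfl⟩; exact ⟨v, hv, rfl⟩

lemma key_sedges {P Q : Finpartition (Finset.univ : Finset V)} {v : V}
    (hv : fpmin P v ≠ v) (h : s(fpmin P v, v) ∈ sedges Q) : fpmin Q v = fpmin P v := by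
  rw [mem_sedges] at h
  obtain ⟨u, hu, he⟩ := h
  rw [Sym2.eq_iff] at he
  rcases he with ⟨h1, h2⟩ | ⟨h1, h2⟩
  · subst h2; exact h1.symm
  · exfalso
    have hq : fpmin Q (fpmin P v) = v := by rw [h1, ← h2]
    have hle := fpmin_le Q (fpmin P v)
    rw [hq] at hle
    exact hv (le_antisymm (fpmin_le P v) hle)

lemma fpmin_eq_of_sedges_eq {P Q : Finpartition (Finset.univ : Finset V)}
    (h : sedges P = sedges Q) : fpmin P = fpmin Q := by
  funext v
  by_cases hP : fpmin P v = v
  · by_cases hQ : fpmin Q v = v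
    · rw [hP, hQ]
    · have hm : s(fpmin Q v, v) ∈ sedges P := by
        rw [h]; exact mem_sedges.2 ⟨v, hQ, rfl⟩
      have := key_sedges hQ hm
      exact absurd (hP.symm.trans this).symm hQ
  · have hm : s(fpmin P v, v) ∈ sedges Q := by
      rw [← h]; exact mem_sedges.2 ⟨v, hP, rfl⟩
    exact (key_sedges hP hm).symm

lemma sedges_injective : Function.Injective (sedges (V := V)) := by
  intro P Q h
  have hf := fpmin_eq_of_sedges_eq h
  ext p
  have main : ∀ P Q : Finpartition (Finset.univ : Finset V), fpmin P = fpmin Q →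
      ∀ p ∈ P.parts, p ∈ Q.parts := by
    intro P Q hf p hp
    obtain ⟨x, hx⟩ := P.nonempty_of_mem_parts hp
    have h1 : p = P.part x := (P.part_eq_of_mem hp hx).symm
    have h2 : P.part x = Q.part x := by
      rw [part_eq_filter P x, part_eq_filter Q x, hf]
    rw [h1, h2]
    exact Q.part_mem.2 (mem_univ x)
  exact ⟨main P Q hf p, main Q P hf.symm p⟩

lemma card_fixed (P : Finpartition (Finset.univ : Finset V)) :
    (Finset.univ.filter (fun v => fpmin P v = v)).card = P.parts.card := by
  apply Finset.card_bij (fun v _ => P.part v)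
  · intro v _
    exact P.part_mem.2 (mem_univ v)
  · intro u hu v hv hpart
    simp only [mem_filter, mem_univ, true_and] at hu hv
    rw [← hu, ← hv]
    exact fpmin_congr P hpart
  · intro p hp
    obtain ⟨x, hx⟩ := P.nonempty_of_mem_parts hp
    refine ⟨fpmin P x, ?_, ?_⟩
    · simp only [mem_filter, mem_univ, true_and]
      exact fpmin_fpmin P x
    · rw [part_fpmin P x]
      exact P.part_eq_of_mem hp hx

lemma card_sedges (P : Finpartition (Finset.univ : Finset V)) :
    (sedges P).card = Fintype.card V - P.parts.card := by
  have hinj : Set.InjOn (fun v => s(fpmin P v, v))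
      ↑(Finset.univ.filter (fun v => fpmin P v ≠ v)) := by
    intro u hu v hv he
    simp only [coe_filter, Set.mem_setOf_eq, mem_univ, true_and] at hu hv
    simp only [Sym2.eq_iff] at he
    rcases he with ⟨h1, h2⟩ | ⟨h1, h2⟩
    · exact h2
    · exfalso
      have hu' : fpmin P u < u := lt_of_le_of_ne (fpmin_le P u) hu
      have hv' : fpmin P v < v := lt_of_le_of_ne (fpmin_le P v) hv
      rw [h1] at hu'
      rw [← h2] at hv'
      exact absurd (hu'.trans hv') (lt_irrefl _)
  rw [sedges, Finset.card_image_of_injOn hinj]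
  have := Finset.card_filter_add_card_filter_not
    (s := (Finset.univ : Finset V)) (p := fun v => fpmin P v = v)
  rw [Finset.card_univ] at this
  have hfix := card_fixed P
  simp only [ne_eq] at this ⊢
  omega

end Aux

/-- The number of `i`-colour partitions of `G`, that is, partitions of the vertex set of `G`
into `i` nonempty independent sets. -/
noncomputable def numPartitions {V : Type} [Fintype V] [DecidableEq V]
    (G : SimpleGraph V) (i : ℕ) : ℕ :=
  Nat.card {P : Finpartition (Finset.univ : Finset V) //
    P.parts.card = i ∧ ∀ p ∈ P.parts, ∀ u ∈ p, ∀ v ∈ p, ¬ G.Adj u v}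

/-- If `G` is a graph of order `n` and size `m`, then for `1 ≤ i ≤ n-1`,
`a_i(G) ≤ (C(n,2) - m)^(n-i) / (n-i)!`. -/
theorem numPartitions_le {V : Type} [Fintype V] [DecidableEq V] (G : SimpleGraph V)
    [DecidableRel G.Adj] (n m i : ℕ) (hn : Fintype.card V = n)
    (hm : G.edgeFinset.card = m) (hi1 : 1 ≤ i) (hi2 : i ≤ n - 1) :
    (numPartitions G i : ℝ) ≤ ((n.choose 2 : ℝ) - m) ^ (n - i) / (n - i).factorial := by
  classical
  letI : LinearOrder V := LinearOrder.lift' (Fintype.equivFin V) (Fintype.equivFin V).injective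
  set k : ℕ := n - i with hk
  -- the non-edge count
  have hmle : m ≤ n.choose 2 := by
    rw [← hm, ← hn]
    exact SimpleGraph.card_edgeFinset_le_card_choose_two
  set N : ℕ := Gᶜ.edgeFinset.card with hN
  have hNcard : m + N = n.choose 2 := by
    have hEF : (G ⊔ Gᶜ).edgeFinset = (⊤ : SimpleGraph V).edgeFinset := by
      ext e
      rw [SimpleGraph.mem_edgeFinset, SimpleGraph.mem_edgeFinset, sup_compl_eq_top]
    rw [← hm, ← hn, ← SimpleGraph.card_edgeFinset_top_eq_card_choose_two (V := V), ← hEF,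
      SimpleGraph.edgeFinset_sup,
      Finset.card_union_of_disjoint
        (SimpleGraph.disjoint_edgeFinset.mpr disjoint_compl_right)]
  -- the injection
  have hinj : numPartitions G i ≤ N.choose k := by
    rw [← Finset.card_powersetCard k Gᶜ.edgeFinset]
    rw [numPartitions]
    have : Nat.card {S : Finset (Sym2 V) // S ∈ Gᶜ.edgeFinset.powersetCard k} =
        (Gᶜ.edgeFinset.powersetCard k).card := by
      rw [Nat.card_eq_fintype_card, Fintype.card_coe]
    rw [← this]
    apply Nat.card_le_card_of_injective
      (f := fun P => (⟨sedges P.1, ?_⟩ :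
        {S : Finset (Sym2 V) // S ∈ Gᶜ.edgeFinset.powersetCard k}))
    · intro P Q hPQ
      simp only [Subtype.mk.injEq] at hPQ
      exact Subtype.ext (sedges_injective hPQ)
    · obtain ⟨P, hPi, hPind⟩ := P
      rw [Finset.mem_powersetCard]
      constructor
      · intro e he
        rw [mem_sedges] at he
        obtain ⟨v, hv, rfl⟩ := he
        rw [SimpleGraph.mem_edgeFinset, SimpleGraph.mem_edgeSet, SimpleGraph.compl_adj]
        refine ⟨hv, ?_⟩
        exact hPind _ (P.part_mem.2 (mem_univ v)) _ (fpmin_mem P v) _ (P.mem_part (mem_univ v))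
      · rw [card_sedges, hn, hPi]
  -- conclude
  calc (numPartitions G i : ℝ) ≤ (N.choose k : ℝ) := by exact_mod_cast hinj
    _ ≤ (N ^ k : ℝ) / k.factorial := Nat.choose_le_pow_div k N
    _ = ((n.choose 2 : ℝ) - m) ^ k / k.factorial := by
        have : (N : ℝ) = (n.choose 2 : ℝ) - m := by
          have := hNcard
          push_cast [← this]
          ring
        rw [this]
end

section
/- Let G be a connected simple graph on n vertices with chromatic number k ≥ 4 whose clique number equals k. Then for every natural number x, the number of proper x-colourings of G satisfies π(G,x) ≤ (x)_↓k · (x−1)^(n−k). -/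
lemma enc_lt {x p c : ℕ} (hp : p < x) (hc : c < x) (hx : 2 ≤ x) :
    (if c < p then c else c - 1) < x - 1 := by split_ifs <;> omega

lemma enc_inj {p c c' : ℕ} (hc : c ≠ p) (hc' : c' ≠ p)
    (h : (if c < p then c else c - 1) = (if c' < p then c' else c' - 1)) : c = c' := by
  split_ifs at h <;> omega

/-- If `G` is a connected `k`-chromatic graph of order `n` with `k ≥ 4` and clique number
`k`, then for every natural number `x`, `π(G,x) ≤ (x)_↓k · (x-1)^(n-k)`. -/
theorem numColorings_le_of_cliqueNum_eq_chromaticNumber {V : Type} [Fintype V]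
    (G : SimpleGraph V) (n k : ℕ) (hn : Fintype.card V = n) (hconn : G.Connected)
    (hk : G.chromaticNumber = k) (hk4 : 4 ≤ k) (hclique : G.cliqueNum = k) (x : ℕ) :
    numColorings G x ≤ x.descFactorial k * (x - 1) ^ (n - k) := by
  classical
  subst hn
  by_cases hxk : x < k
  · -- no colorings at all
    have he : IsEmpty {f : V → Fin x // ∀ ⦃u w : V⦄, G.Adj u w → f u ≠ f w} := by
      constructor
      rintro ⟨f, hf⟩
      have hcol : G.Colorable x := ⟨SimpleGraph.Coloring.mk f fun {u w} h => hf h⟩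
      have hle := hcol.chromaticNumber_le
      rw [hk] at hle
      have : k ≤ x := by exact_mod_cast hle
      omega
    have : numColorings G x = 0 := by
      simp [numColorings, Nat.card_of_isEmpty]
    simp [this]
  push_neg at hxk
  have hx2 : 2 ≤ x := le_trans (by omega) hxk
  obtain ⟨s, hs⟩ := G.exists_isNClique_cliqueNum
  rw [hclique] at hs
  have hcard : s.card = k := hs.card_eq
  obtain ⟨root, hroot⟩ : ∃ r, r ∈ s := Finset.card_pos.mp (by omega)
  set D : V → ℕ := fun v => G.dist root v with hDdef
  have parent_ex : ∀ v : V, v ≠ root → ∃ u, G.Adj u v ∧ D u < D v := by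
    intro v hv
    obtain ⟨p, hp⟩ := (hconn.preconnected root v).exists_walk_length_eq_dist
    have hpr : p.reverse.length = p.length := SimpleGraph.Walk.length_reverse p
    cases hq : p.reverse with
    | nil => exact absurd rfl hv
    | cons hadj q =>
      refine ⟨_, hadj.symm, ?_⟩
      have h1 : G.dist root _ ≤ q.reverse.length := SimpleGraph.dist_le q.reverse
      have h2 : q.reverse.length = q.length := SimpleGraph.Walk.length_reverse q
      have h3 : p.reverse.length = q.length + 1 := by rw [hq]; simp
      simp only [hDdef]
      omega
  choose par hadj hlt using parent_ex
  have hne : ∀ v : V, v ∉ s → v ≠ root := fun v hv h => hv (h ▸ hroot)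
  -- the injection
  let Φ : {f : V → Fin x // ∀ ⦃u w : V⦄, G.Adj u w → f u ≠ f w} →
      ((↥s ↪ Fin x) × (↥(sᶜ : Finset V) → Fin (x - 1))) := fun f =>
    (⟨fun v => f.1 v.1, by
        rintro ⟨a, ha⟩ ⟨b, hb⟩ hab
        by_contra hne'
        exact f.2 (hs.isClique ha hb (by simpa using hne')) hab⟩,
     fun v =>
       ⟨if (f.1 v.1).val < (f.1 (par v.1 (hne v.1 (Finset.mem_compl.mp v.2)))).val
          then (f.1 v.1).val else (f.1 v.1).val - 1,
        enc_lt (Fin.is_lt _) (Fin.is_lt _) hx2⟩)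
  have hΦ : Function.Injective Φ := by
    rintro f g hfg
    have h1 := congrArg Prod.fst hfg
    have h2 := congrArg Prod.snd hfg
    simp only [Φ] at h1 h2
    have key : ∀ m, ∀ v : V, D v ≤ m → f.1 v = g.1 v := by
      intro m
      induction m with
      | zero =>
        intro v hv
        have h0 : G.dist root v = 0 := Nat.le_zero.mp hv
        have : v = root := ((hconn.dist_eq_zero_iff (u := root) (v := v)).mp h0).symm
        subst this
        exact DFunLike.congr_fun h1 (⟨v, hroot⟩ : ↥s)
      | succ m ih =>
        intro v hv
        by_cases hvs : v ∈ s
        · exact DFunLike.congr_fun h1 (⟨v, hvs⟩ : ↥s)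
        · have hvr : v ≠ root := hne v hvs
          have hu : f.1 (par v hvr) = g.1 (par v hvr) := by
            apply ih
            have := hlt v hvr
            omega
          have h2v := congrFun h2 (⟨v, by simpa using hvs⟩ : ↥(sᶜ : Finset V))
          have h2v' := congrArg Fin.val h2v
          simp only at h2v'
          have hfp : (f.1 v).val ≠ (f.1 (par v hvr)).val := by
            intro hcontra
            exact f.2 (hadj v hvr) (Fin.ext hcontra).symm
          have hgp : (g.1 v).val ≠ (g.1 (par v hvr)).val := by
            intro hcontra
            exact g.2 (hadj v hvr) (Fin.ext hcontra).symm
          rw [hu] at h2v' hfp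
          exact Fin.ext (enc_inj hfp hgp h2v')
    exact Subtype.ext (funext fun v => key (D v) v le_rfl)
  have hle := Nat.card_le_card_of_injective Φ hΦ
  rw [numColorings]
  refine le_trans hle ?_
  rw [Nat.card_eq_fintype_card, Fintype.card_prod, Fintype.card_embedding_eq,
    Fintype.card_fun, Fintype.card_coe, Fintype.card_fin, Fintype.card_fin,
    Fintype.card_coe, Finset.card_compl, hcard]
end

section
/- Every connected simple graph on n vertices with chromatic number k has at least C(k,2) + n − k edges. -/
open SimpleGraph Finset

section Aux

variable {V : Type} [Fintype V] [DecidableEq V]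

/-- The graph obtained by deleting a vertex. -/
abbrev delVert (G : SimpleGraph V) (v : V) : SimpleGraph {u : V // u ≠ v} :=
  G.comap (Function.Embedding.subtype _)

instance (G : SimpleGraph V) [DecidableRel G.Adj] (v : V) :
    DecidableRel (delVert G v).Adj :=
  fun a b => inferInstanceAs (Decidable (G.Adj a.1 b.1))

lemma delVert_edge_count (G : SimpleGraph V) [DecidableRel G.Adj] (v : V) :
    (delVert G v).edgeFinset.card + G.degree v ≤ G.edgeFinset.card := by
  classical
  have hsplit :
      (G.edgeFinset.filter (fun e => v ∈ e)).card
        + (G.edgeFinset.filter (fun e => ¬ v ∈ e)).card = G.edgeFinset.card :=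
    Finset.card_filter_add_card_filter_not _
  have hdeg : (G.edgeFinset.filter (fun e => v ∈ e)).card = G.degree v := by
    rw [← G.incidenceFinset_eq_filter v, G.card_incidenceFinset_eq_degree]
  have himg : ((delVert G v).edgeFinset.image (Sym2.map Subtype.val))
      ⊆ G.edgeFinset.filter (fun e => ¬ v ∈ e) := by
    intro e he
    simp only [Finset.mem_image] at he
    obtain ⟨e', he', rfl⟩ := he
    induction e' using Sym2.ind with
    | _ a b =>
      rw [mem_edgeFinset, mem_edgeSet] at he'
      rw [Finset.mem_filter, Sym2.map_pair_eq, mem_edgeFinset, mem_edgeSet]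
      refine ⟨he', ?_⟩
      rw [Sym2.mem_iff]
      push_neg
      exact ⟨Ne.symm a.2, Ne.symm b.2⟩
  have hinj : ((delVert G v).edgeFinset.image (Sym2.map Subtype.val)).card
      = (delVert G v).edgeFinset.card :=
    Finset.card_image_of_injective _ (Sym2.map.injective Subtype.val_injective)
  have := Finset.card_le_card himg
  omega

lemma delVert_colorable_succ (G : SimpleGraph V) (v : V) {N : ℕ}
    (h : (delVert G v).Colorable N) : G.Colorable (N + 1) := by
  obtain ⟨C⟩ := h
  refine ⟨Coloring.mk (fun u => if hu : u = v then Fin.last N else (C ⟨u, hu⟩).castSucc) ?_⟩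
  intro a b hab
  by_cases ha : a = v <;> by_cases hb : b = v
  · exact absurd (ha ▸ hb ▸ hab) (G.irrefl)
  · simp only [ha, hb, dif_pos, dif_neg, not_false_iff]
    exact (Fin.castSucc_lt_last _).ne'
  · simp only [ha, hb, dif_pos, dif_neg, not_false_iff]
    exact (Fin.castSucc_lt_last _).ne
  · simp only [ha, hb, dif_neg, not_false_iff]
    intro hEq
    exact C.valid (show (delVert G v).Adj ⟨a, ha⟩ ⟨b, hb⟩ from hab)
      (Fin.castSucc_injective _ hEq)

lemma delVert_colorable_extend (G : SimpleGraph V) [DecidableRel G.Adj] (v : V) {N : ℕ}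
    (h : (delVert G v).Colorable N) (hdeg : G.degree v < N) : G.Colorable N := by
  obtain ⟨C⟩ := h
  set S : Finset (Fin N) :=
    (G.neighborFinset v).attach.image
      (fun u => C ⟨u.1, fun h' => G.irrefl (h' ▸ (G.mem_neighborFinset v u.1).mp u.2)⟩) with hS
  have hcard : S.card < N := by
    calc S.card ≤ (G.neighborFinset v).attach.card := Finset.card_image_le
    _ = G.degree v := by rw [Finset.card_attach, G.card_neighborFinset_eq_degree]
    _ < N := hdeg
  have hex : ∃ c : Fin N, c ∉ S := by
    by_contra hc
    push_neg at hc
    have : (Finset.univ : Finset (Fin N)) ⊆ S := fun c _ => hc c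
    have := Finset.card_le_card this
    simp only [Finset.card_univ, Fintype.card_fin] at this
    omega
  obtain ⟨c, hc⟩ := hex
  refine ⟨Coloring.mk (fun u => if hu : u = v then c else C ⟨u, hu⟩) ?_⟩
  intro a b hab
  by_cases ha : a = v <;> by_cases hb : b = v
  · exact absurd (ha ▸ hb ▸ hab) (G.irrefl)
  · simp only [ha, hb, dif_pos, dif_neg, not_false_iff]
    intro hEq
    apply hc
    rw [hS]
    apply Finset.mem_image.mpr
    have hbmem : b ∈ G.neighborFinset v := (G.mem_neighborFinset v b).mpr (ha ▸ hab)
    exact ⟨⟨b, hbmem⟩, Finset.mem_attach _ _, hEq.symm⟩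
  · simp only [ha, hb, dif_pos, dif_neg, not_false_iff]
    intro hEq
    apply hc
    rw [hS]
    apply Finset.mem_image.mpr
    have hamem : a ∈ G.neighborFinset v := (G.mem_neighborFinset v a).mpr (hb ▸ hab.symm)
    exact ⟨⟨a, hamem⟩, Finset.mem_attach _ _, hEq⟩
  · simp only [ha, hb, dif_neg, not_false_iff]
    exact C.valid (show (delVert G v).Adj ⟨a, ha⟩ ⟨b, hb⟩ from hab)

lemma delVert_connected (G : SimpleGraph V) (hconn : G.Connected) (r v : V) (hrv : r ≠ v)
    (hmax : ∀ u : V, G.dist r u ≤ G.dist r v) : (delVert G v).Connected := by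
  have key : ∀ m (u : V) (hu : u ≠ v), G.dist r u ≤ m →
      (delVert G v).Reachable ⟨u, hu⟩ ⟨r, hrv⟩ := by
    intro m
    induction m with
    | zero =>
      intro u hu hd
      have : u = r := ((hconn.dist_eq_zero_iff).mp (Nat.le_zero.mp hd)).symm
      subst this
      rfl
    | succ m ih =>
      intro u hu hd
      by_cases hur : u = r
      · subst hur
        rfl
      · have hpos : 0 < G.dist r u := hconn.pos_dist_of_ne (fun h => hur h.symm)
        obtain ⟨p, hp⟩ := (hconn r u).exists_walk_length_eq_dist
        cases hq : p.reverse with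
        | nil => exact absurd rfl hur
        | cons hadj q' =>
          rename_i w
          have hlen : q'.length + 1 = G.dist r u := by
            have : p.reverse.length = G.dist r u := by rw [SimpleGraph.Walk.length_reverse, hp]
            rw [hq] at this
            simpa using this
          have hdrw : G.dist r w ≤ q'.length := by
            have h1 : G.dist r w ≤ q'.reverse.length := SimpleGraph.dist_le _
            rwa [SimpleGraph.Walk.length_reverse] at h1
          have hwv : w ≠ v := by
            intro hwv
            subst hwv
            have h2 := hmax u
            omega
          have hdw : G.dist r w ≤ m := by omega
          exact (SimpleGraph.Adj.reachable
            (show (delVert G v).Adj ⟨u, hu⟩ ⟨w, hwv⟩ from hadj)).trans (ih w hwv hdw)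
  rw [connected_iff]
  refine ⟨fun a b => ?_, ⟨⟨r, hrv⟩⟩⟩
  exact (key _ a.1 a.2 le_rfl).trans (key _ b.1 b.2 le_rfl).symm

theorem aux_card_edge (n : ℕ) :
    ∀ (V : Type) [Fintype V] [DecidableEq V] (G : SimpleGraph V) [DecidableRel G.Adj],
      Fintype.card V = n → G.Connected → ∀ k : ℕ, G.chromaticNumber = k →
      k.choose 2 + n - k ≤ G.edgeFinset.card := by
  induction n using Nat.strong_induction_on with
  | _ n ih =>
    intro V _ _ G _ hn hconn k hk
    have hne : Nonempty V := hconn.nonempty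
    have hn1 : 1 ≤ n := by rw [← hn]; exact Fintype.card_pos
    have hcolk : G.Colorable k := chromaticNumber_le_iff_colorable.mp (le_of_eq hk)
    have hkn : k ≤ n := by
      have h1 : G.chromaticNumber ≤ (n : ℕ∞) := by
        rw [← hn]
        exact (G.colorable_of_fintype).chromaticNumber_le
      rw [hk] at h1
      exact_mod_cast h1
    have hk1 : 1 ≤ k := by
      rcases Nat.eq_zero_or_pos k with h0 | h
      · obtain ⟨C⟩ := hcolk
        rw [h0] at C
        exact absurd (C (Classical.arbitrary V)).2 (by simp)
      · exact h
    rcases Nat.lt_or_ge n 2 with hn2 | hn2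
    · -- n = 1, k = 1
      have : n = 1 := by omega
      have hkeq : k = 1 := by omega
      subst this; subst hkeq
      simp
    · -- n ≥ 2 : pick a root r and a vertex v at maximal distance
      obtain ⟨r⟩ := hne
      obtain ⟨v, -, hv⟩ := Finset.exists_max_image Finset.univ (G.dist r) ⟨r, Finset.mem_univ r⟩
      have hv' : ∀ u : V, G.dist r u ≤ G.dist r v := fun u => hv u (Finset.mem_univ u)
      have hrv : r ≠ v := by
        obtain ⟨u, hu⟩ := Fintype.exists_ne_of_one_lt_card (by omega) r
        intro h
        have h1 : 0 < G.dist r u := hconn.pos_dist_of_ne (Ne.symm hu)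
        have h2 := hv' u
        have h3 : G.dist r v = 0 := by rw [← h]; exact SimpleGraph.dist_self
        omega
      set G' := delVert G v with hG'
      have hcard' : Fintype.card {u : V // u ≠ v} = n - 1 := by
        have h1 : Fintype.card {u : V // u = v} = 1 := Fintype.card_subtype_eq v
        have h2 := Fintype.card_subtype_compl (fun u : V => u = v)
        rw [h1, hn] at h2
        exact h2
      have hconn' : G'.Connected := delVert_connected G hconn r v hrv hv'
      have hfin' : G'.chromaticNumber ≠ ⊤ := by
        rw [chromaticNumber_ne_top_iff_exists]
        exact ⟨_, G'.colorable_of_fintype⟩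
      set k' := G'.chromaticNumber.toNat with hk'def
      have hk' : G'.chromaticNumber = (k' : ℕ∞) := (ENat.coe_toNat hfin').symm
      have hcol' : G'.Colorable k' := chromaticNumber_le_iff_colorable.mp (le_of_eq hk')
      have hih : k'.choose 2 + (n - 1) - k' ≤ G'.edgeFinset.card :=
        ih (n - 1) (by omega) _ G' hcard' hconn' k' hk'
      have hk'k : k' ≤ k := by
        have h1 : G'.Colorable k :=
          Colorable.of_hom (SimpleGraph.Embedding.comap (Function.Embedding.subtype _) G).toHom hcolk
        have h2 := h1.chromaticNumber_le
        rw [hk'] at h2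
        exact_mod_cast h2
      have hkk' : k ≤ k' + 1 := by
        have h1 : G.Colorable (k' + 1) := delVert_colorable_succ G v hcol'
        have h2 := h1.chromaticNumber_le
        rw [hk] at h2
        exact_mod_cast h2
      have hk'n : k' ≤ n - 1 := by
        have h1 : G'.chromaticNumber ≤ ((n - 1 : ℕ) : ℕ∞) := by
          rw [← hcard']
          exact (G'.colorable_of_fintype).chromaticNumber_le
        rw [hk'] at h1
        exact_mod_cast h1
      have hdeg1 : 1 ≤ G.degree v := by
        rw [Nat.succ_le_iff, G.degree_pos_iff_exists_adj v]
        obtain ⟨u, hu⟩ := Fintype.exists_ne_of_one_lt_card (by omega) v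
        have hp : 0 < G.dist v u := hconn.pos_dist_of_ne (Ne.symm hu)
        obtain ⟨p, hp'⟩ := (hconn v u).exists_walk_length_eq_dist
        cases p with
        | nil => simp at hp'; simp at hp
        | cons hadj q => exact ⟨_, hadj⟩
      have hedge : G'.edgeFinset.card + G.degree v ≤ G.edgeFinset.card :=
        delVert_edge_count G v
      rcases Nat.lt_or_ge k' k with hlt | hge
      · -- k = k' + 1 ; moreover degree v ≥ k'
        have hkeq : k = k' + 1 := by omega
        have hdegk : k' ≤ G.degree v := by
          by_contra hc
          push_neg at hc
          have h1 : G.Colorable k' := delVert_colorable_extend G v hcol' hc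
          have h2 := h1.chromaticNumber_le
          rw [hk] at h2
          have : k ≤ k' := by exact_mod_cast h2
          omega
        have hchoose : k.choose 2 = k' + k'.choose 2 := by
          rw [hkeq]
          rw [Nat.choose_succ_succ]
          rw [Nat.choose_one_right]
        omega
      · -- k' = k
        have hkeq : k' = k := le_antisymm hk'k hge
        rw [hkeq] at hih hk'n
        omega

end Aux

/-- Every connected `k`-chromatic graph of order `n` has at least `C(k,2) + n - k` edges. -/
theorem card_edgeFinset_ge_of_connected {V : Type} [Fintype V] [DecidableEq V]
    (G : SimpleGraph V) [DecidableRel G.Adj] (n k : ℕ) (hn : Fintype.card V = n)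
    (hconn : G.Connected) (hk : G.chromaticNumber = k) :
    k.choose 2 + n - k ≤ G.edgeFinset.card := by
  exact aux_card_edge n V G hn hconn k hk
end

section
/- Let G1 and G2 be simple graphs whose vertex sets intersect in a set S of r vertices that induces a complete graph (a clique) in both G1 and G2, and suppose the edge set of the union graph G = G1 ∪ G2 is the union of the edge sets of G1 and G2. Then for every natural number x ≥ r, the numbers of proper x-colourings satisfy π(G,x)·(x)_↓r = π(G1,x)·π(G2,x). -/
open Function

private lemma exists_perm_comp {α β : Type} [Fintype α] [Fintype β] [DecidableEq β]
    {g g' : α → β} (hg : Injective g) (hg' : Injective g') :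
    ∃ σ : Equiv.Perm β, σ ∘ g = g' := by
  classical
  have h1 : Fintype.card (Set.range g) = Fintype.card (Set.range g') := by
    rw [Set.card_range_of_injective hg, Set.card_range_of_injective hg']
  have h2 : Fintype.card (↥(Set.range g)ᶜ) = Fintype.card (↥(Set.range g')ᶜ) := by
    rw [Fintype.card_compl_set, Fintype.card_compl_set, h1]
  let e : (Set.range g) ≃ (Set.range g') :=
    (Equiv.ofInjective g hg).symm.trans (Equiv.ofInjective g' hg')
  let e' : ((Set.range g)ᶜ : Set β) ≃ ((Set.range g')ᶜ : Set β) := Fintype.equivOfCardEq h2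
  refine ⟨(Equiv.sumCompl (· ∈ Set.range g)).symm.trans
    ((e.sumCongr e').trans (Equiv.sumCompl (· ∈ Set.range g'))), ?_⟩
  funext a
  have h3 : (Equiv.sumCompl (· ∈ Set.range g)).symm (g a) = Sum.inl ⟨g a, ⟨a, rfl⟩⟩ :=
    Equiv.sumCompl_symm_apply_of_pos ⟨a, rfl⟩
  simp only [comp_apply, Equiv.trans_apply, h3, Equiv.sumCongr_apply, Sum.map_inl,
    Equiv.sumCompl_apply_inl]
  show ((Equiv.ofInjective g' hg') ((Equiv.ofInjective g hg).symm ⟨g a, ⟨a, rfl⟩⟩) : β) = g' a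
  rw [show (⟨g a, ⟨a, rfl⟩⟩ : Set.range g) = Equiv.ofInjective g hg a from rfl,
    Equiv.symm_apply_apply]
  rfl

private lemma nat_card_sigma {ι : Type} [Fintype ι] (f : ι → Type) [∀ i, Finite (f i)] :
    Nat.card (Σ i, f i) = ∑ i, Nat.card (f i) := by
  classical
  letI : ∀ i, Fintype (f i) := fun i => Fintype.ofFinite (f i)
  simp_rw [Nat.card_eq_fintype_card, Fintype.card_sigma]

section Aux
variable {W S : Type} (H : SimpleGraph W) (x : ℕ) (j : S → W)

private def Col : Type := {f : W → Fin x // ∀ ⦃u w : W⦄, H.Adj u w → f u ≠ f w}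

private instance [Finite W] : Finite (Col H x) := by unfold Col; infer_instance

private def Fib (g : S → Fin x) : Type := {f : Col H x // f.1 ∘ j = g}

private instance [Finite W] (g : S → Fin x) : Finite (Fib H x j g) := by
  unfold Fib; infer_instance

private lemma card_col_eq_sum [Fintype S] [DecidableEq S] [Finite W] :
    Nat.card (Col H x) = ∑ g : S → Fin x, Nat.card (Fib H x j g) := by
  classical
  rw [← Nat.card_congr (Equiv.sigmaFiberEquiv (fun f : Col H x => f.1 ∘ j)),
    nat_card_sigma]
  rfl

private lemma fib_inj (hc : ∀ s t : S, s ≠ t → H.Adj (j s) (j t)) {g : S → Fin x}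
    (f : Fib H x j g) : Injective g := by
  intro s t hst
  by_contra hne
  apply f.1.2 (hc s t hne)
  have h1 := congrFun f.2 s
  have h2 := congrFun f.2 t
  simp only [comp_apply] at h1 h2
  rw [h1, h2, hst]

private lemma card_fib_eq [Fintype S] {g g' : S → Fin x} (hg : Injective g)
    (hg' : Injective g') : Nat.card (Fib H x j g) = Nat.card (Fib H x j g') := by
  classical
  obtain ⟨σ, hσ⟩ := exists_perm_comp hg hg'
  apply Nat.card_congr
  refine ⟨fun f => ⟨⟨σ ∘ f.1.1, fun u w h hn => f.1.2 h (σ.injective hn)⟩, ?_⟩,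
    fun f => ⟨⟨σ.symm ∘ f.1.1, fun u w h hn => f.1.2 h (σ.symm.injective hn)⟩, ?_⟩, ?_, ?_⟩
  · funext s
    simp only [comp_apply]
    rw [show f.1.1 (j s) = g s from congrFun f.2 s, ← congrFun hσ s]
    rfl
  · funext s
    simp only [comp_apply]
    rw [show f.1.1 (j s) = g' s from congrFun f.2 s, ← hσ]
    simp
  · intro f
    apply Subtype.ext; apply Subtype.ext; funext v
    simp
  · intro f
    apply Subtype.ext; apply Subtype.ext; funext v
    simp

end Aux

section Main
variable {V : Type} [Fintype V] [DecidableEq V] (G : SimpleGraph V) (A B : Finset V)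

private def iA : (((A ∩ B : Finset V) : Set V)) → (((A : Finset V) : Set V)) :=
  fun s => ⟨s.1, Finset.mem_coe.mpr (Finset.mem_inter.mp (Finset.mem_coe.mp s.2)).1⟩

private def iB : (((A ∩ B : Finset V) : Set V)) → (((B : Finset V) : Set V)) :=
  fun s => ⟨s.1, Finset.mem_coe.mpr (Finset.mem_inter.mp (Finset.mem_coe.mp s.2)).2⟩

private def glue (hU : A ∪ B = Finset.univ) {x : ℕ}
    (fA : Col (G.induce ((A : Finset V) : Set V)) x)
    (fB : Col (G.induce ((B : Finset V) : Set V)) x) : V → Fin x :=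
  fun v => if h : v ∈ A then fA.1 ⟨v, Finset.mem_coe.mpr h⟩ else fB.1 ⟨v, by
    have hv := Finset.mem_univ v
    rw [← hU, Finset.mem_union] at hv
    exact Finset.mem_coe.mpr (hv.resolve_left h)⟩

variable {G A B}

private lemma glue_A (hU : A ∪ B = Finset.univ) {x : ℕ}
    {fA : Col (G.induce ((A : Finset V) : Set V)) x}
    {fB : Col (G.induce ((B : Finset V) : Set V)) x} (v : V) (h : v ∈ A) :
    glue G A B hU fA fB v = fA.1 ⟨v, Finset.mem_coe.mpr h⟩ := dif_pos h

private lemma glue_B (hU : A ∪ B = Finset.univ) {x : ℕ}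
    {fA : Col (G.induce ((A : Finset V) : Set V)) x}
    {fB : Col (G.induce ((B : Finset V) : Set V)) x}
    {g : (((A ∩ B : Finset V) : Set V)) → Fin x}
    (hA : fA.1 ∘ iA A B = g) (hB : fB.1 ∘ iB A B = g) (v : V) (h : v ∈ B) :
    glue G A B hU fA fB v = fB.1 ⟨v, Finset.mem_coe.mpr h⟩ := by
  by_cases hvA : v ∈ A
  · rw [glue_A hU v hvA]
    have hs : v ∈ A ∩ B := Finset.mem_inter.mpr ⟨hvA, h⟩
    have e1 := congrFun hA ⟨v, Finset.mem_coe.mpr hs⟩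
    have e2 := congrFun hB ⟨v, Finset.mem_coe.mpr hs⟩
    exact e1.trans e2.symm
  · exact dif_neg hvA

private lemma card_fib_glue (hU : A ∪ B = Finset.univ)
    (hedges : ∀ u v : V, G.Adj u v → (u ∈ A ∧ v ∈ A) ∨ (u ∈ B ∧ v ∈ B))
    {x : ℕ} (g : (((A ∩ B : Finset V) : Set V)) → Fin x) :
    Nat.card (Fib G x (Subtype.val) g) =
      Nat.card (Fib (G.induce ((A : Finset V) : Set V)) x (iA A B) g) *
        Nat.card (Fib (G.induce ((B : Finset V) : Set V)) x (iB A B) g) := by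
  rw [← Nat.card_prod]
  apply Nat.card_congr
  refine ⟨fun f => ⟨⟨⟨fun a => f.1.1 a.1, fun u w h => f.1.2 h⟩, ?_⟩,
      ⟨⟨fun b => f.1.1 b.1, fun u w h => f.1.2 h⟩, ?_⟩⟩,
    fun p => ⟨⟨glue G A B hU p.1.1 p.2.1, ?_⟩, ?_⟩, ?_, ?_⟩
  · funext s; exact congrFun f.2 s
  · funext s; exact congrFun f.2 s
  · intro u v huv
    rcases hedges u v huv with ⟨h1, h2⟩ | ⟨h1, h2⟩
    · rw [glue_A hU u h1, glue_A hU v h2]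
      exact p.1.1.2 huv
    · rw [glue_B hU p.1.2 p.2.2 u h1, glue_B hU p.1.2 p.2.2 v h2]
      exact p.2.1.2 huv
  · funext s
    have hsA : s.1 ∈ A := (Finset.mem_inter.mp (Finset.mem_coe.mp s.2)).1
    show glue G A B hU p.1.1 p.2.1 s.1 = g s
    rw [glue_A hU s.1 hsA]
    exact congrFun p.1.2 s
  · intro f
    apply Subtype.ext; apply Subtype.ext; funext v
    show glue G A B hU _ _ v = f.1.1 v
    by_cases h : v ∈ A
    · exact dif_pos h
    · exact dif_neg h
  · intro p
    refine Prod.ext ?_ ?_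
    · apply Subtype.ext; apply Subtype.ext; funext a
      have ha : a.1 ∈ A := Finset.mem_coe.mp a.2
      show glue G A B hU p.1.1 p.2.1 a.1 = p.1.1.1 a
      rw [glue_A hU a.1 ha]
    · apply Subtype.ext; apply Subtype.ext; funext b
      have hb : b.1 ∈ B := Finset.mem_coe.mp b.2
      show glue G A B hU p.1.1 p.2.1 b.1 = p.2.1.1 b
      rw [glue_B hU p.1.2 p.2.2 b.1 hb]

end Main

/-- Complete cutset theorem: if `G` is the union of the subgraphs induced on vertex sets
`A` and `B` (i.e. every edge of `G` lies within `A` or within `B`, and `A ∪ B` is the whole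
vertex set), and `A ∩ B` is a clique of `r` vertices, then for every natural number `x ≥ r`,
`π(G,x) · (x)_↓r = π(G[A],x) · π(G[B],x)`. -/
theorem numColorings_mul_descFactorial_of_clique_cut {V : Type} [Fintype V] [DecidableEq V]
    (G : SimpleGraph V) (A B : Finset V) (r : ℕ)
    (hU : A ∪ B = Finset.univ) (hr : (A ∩ B).card = r)
    (hclique : G.IsClique ((A ∩ B : Finset V) : Set V))
    (hedges : ∀ u v : V, G.Adj u v → (u ∈ A ∧ v ∈ A) ∨ (u ∈ B ∧ v ∈ B))
    (x : ℕ) (hx : r ≤ x) :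
    numColorings G x * x.descFactorial r =
      numColorings (G.induce ((A : Finset V) : Set V)) x *
        numColorings (G.induce ((B : Finset V) : Set V)) x := by
  classical
  have hrS : Nat.card (((A ∩ B : Finset V) : Set V)) = r := by
    rw [Nat.card_coe_set_eq, Set.ncard_coe_finset, hr]
  have hrS' : Fintype.card (((A ∩ B : Finset V) : Set V)) = r := by
    rw [← Nat.card_eq_fintype_card, hrS]
  -- clique facts
  have hcV : ∀ s t : (((A ∩ B : Finset V) : Set V)), s ≠ t → G.Adj s.1 t.1 :=
    fun s t h => hclique s.2 t.2 (fun e => h (Subtype.ext e))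
  have hcA : ∀ s t : (((A ∩ B : Finset V) : Set V)), s ≠ t →
      (G.induce ((A : Finset V) : Set V)).Adj (iA A B s) (iA A B t) :=
    fun s t h => hcV s t h
  have hcB : ∀ s t : (((A ∩ B : Finset V) : Set V)), s ≠ t →
      (G.induce ((B : Finset V) : Set V)).Adj (iB A B s) (iB A B t) :=
    fun s t h => hcV s t h
  -- a base injective function
  obtain ⟨g₀e⟩ : Nonempty ((((A ∩ B : Finset V) : Set V)) ↪ Fin x) :=
    Function.Embedding.nonempty_iff_card_le.mpr (by rw [hrS', Fintype.card_fin]; exact hx)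
  set g₀ : (((A ∩ B : Finset V) : Set V)) → Fin x := ⇑g₀e with hg₀def
  have hg₀ : Function.Injective g₀ := g₀e.injective
  set nA := Nat.card (Fib (G.induce ((A : Finset V) : Set V)) x (iA A B) g₀) with hnA
  set nB := Nat.card (Fib (G.induce ((B : Finset V) : Set V)) x (iB A B) g₀) with hnB
  set K := (Finset.univ.filter
    (fun g : (((A ∩ B : Finset V) : Set V)) → Fin x => Function.Injective g)).card with hK
  have hKval : K = x.descFactorial r := by
    rw [hK, ← Fintype.card_subtype,
      Fintype.card_congr (Equiv.subtypeInjectiveEquivEmbedding _ _),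
      Fintype.card_embedding_eq, Fintype.card_fin, hrS']
  have hsumA : Nat.card (Col (G.induce ((A : Finset V) : Set V)) x) = K * nA := by
    rw [card_col_eq_sum _ x (iA A B)]
    have : ∀ g ∈ Finset.univ, Nat.card (Fib (G.induce ((A : Finset V) : Set V)) x (iA A B) g)
        = if Function.Injective g then nA else 0 := by
      intro g _
      by_cases hg : Function.Injective g
      · rw [if_pos hg, hnA]; exact card_fib_eq _ x _ hg hg₀
      · rw [if_neg hg]
        have : IsEmpty (Fib (G.induce ((A : Finset V) : Set V)) x (iA A B) g) :=
          ⟨fun f => hg (fib_inj _ x _ hcA f)⟩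
        exact Nat.card_of_isEmpty
    rw [Finset.sum_congr rfl this, Finset.sum_ite, Finset.sum_const, Finset.sum_const_zero,
      add_zero, smul_eq_mul, hK]
  have hsumB : Nat.card (Col (G.induce ((B : Finset V) : Set V)) x) = K * nB := by
    rw [card_col_eq_sum _ x (iB A B)]
    have : ∀ g ∈ Finset.univ, Nat.card (Fib (G.induce ((B : Finset V) : Set V)) x (iB A B) g)
        = if Function.Injective g then nB else 0 := by
      intro g _
      by_cases hg : Function.Injective g
      · rw [if_pos hg, hnB]; exact card_fib_eq _ x _ hg hg₀
      · rw [if_neg hg]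
        have : IsEmpty (Fib (G.induce ((B : Finset V) : Set V)) x (iB A B) g) :=
          ⟨fun f => hg (fib_inj _ x _ hcB f)⟩
        exact Nat.card_of_isEmpty
    rw [Finset.sum_congr rfl this, Finset.sum_ite, Finset.sum_const, Finset.sum_const_zero,
      add_zero, smul_eq_mul, hK]
  have hsumG : Nat.card (Col G x) = K * (nA * nB) := by
    rw [card_col_eq_sum G x (Subtype.val : (((A ∩ B : Finset V) : Set V)) → V)]
    have : ∀ g ∈ Finset.univ, Nat.card (Fib G x
        (Subtype.val : (((A ∩ B : Finset V) : Set V)) → V) g)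
        = if Function.Injective g then nA * nB else 0 := by
      intro g _
      by_cases hg : Function.Injective g
      · rw [if_pos hg, card_fib_glue hU hedges g, hnA, hnB,
          card_fib_eq _ x _ hg hg₀, card_fib_eq _ x _ hg hg₀]
      · rw [if_neg hg]
        have : IsEmpty (Fib G x (Subtype.val : (((A ∩ B : Finset V) : Set V)) → V) g) :=
          ⟨fun f => hg (fib_inj _ x _ hcV f)⟩
        exact Nat.card_of_isEmpty
    rw [Finset.sum_congr rfl this, Finset.sum_ite, Finset.sum_const, Finset.sum_const_zero,
      add_zero, smul_eq_mul, hK]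
  show Nat.card (Col G x) * x.descFactorial r =
    Nat.card (Col (G.induce ((A : Finset V) : Set V)) x) *
      Nat.card (Col (G.induce ((B : Finset V) : Set V)) x)
  rw [hsumG, hsumA, hsumB, ← hKval]
  ring
end
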